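/- arXiv:0712.2143 — 6 statements merged into one kernel-verified Lean document; each statement's English description precedes it below -/
import Mathlib

section
/- Let G = (S,E) be a graph and let w, w' be injective words with c(w) = c(w') = σ such that D_w = D_{w'}. Then w and w' belong to the same commutation class, i.e., w' can be obtained from w by a sequence of adjacent transpositions of letters not joined by an edge of G. -/
/-- The digraph `D_w` associated to a word `w` and a graph `G`. -/
def Dw {S : Type*} (G : SimpleGraph S) (w : List S) : S → S → Prop :=
  fun a b => G.Adj a b ∧ [a, b].Sublist w

/-- A single commutation step: swap two adjacent letters not joined by an
edge of `G`. -/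
def CommStep {S : Type*} (G : SimpleGraph S) (w w' : List S) : Prop :=
  ∃ (u v : List S) (s s' : S), ¬ G.Adj s s' ∧
    w = u ++ s :: s' :: v ∧ w' = u ++ s' :: s :: v

/-!
Induct on `w = a :: t`. Every letter `b` preceding `a` in `w'` is not adjacent to `a`, since
otherwise `b → a` would be an edge of `D_{w'}` but not of `D_w`, where `a` comes first. Hence `a`
can be commuted to the front of `w'`. Deleting `a` from both words preserves the content and the
digraph, so the induction hypothesis applies to the tails.
-/

section

variable {S : Type*} {G : SimpleGraph S}

theorem CommStep.cons {t t' : List S} (a : S) (h : CommStep G t t') :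
    CommStep G (a :: t) (a :: t') := by
  obtain ⟨u, v, s, s', hss', rfl, rfl⟩ := h
  exact ⟨a :: u, v, s, s', hss', rfl, rfl⟩

theorem eqvGen_commStep_cons {t t' : List S} (a : S)
    (h : Relation.EqvGen (CommStep G) t t') :
    Relation.EqvGen (CommStep G) (a :: t) (a :: t') := by
  induction h with
  | rel _ _ h => exact .rel _ _ (h.cons a)
  | refl _ => exact .refl _
  | symm _ _ _ ih => exact ih.symm
  | trans _ _ _ _ _ ih₁ ih₂ => exact ih₁.trans _ _ _ ih₂

theorem eqvGen_commStep_append_cons {a : S} :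
    ∀ {u : List S} (v : List S), (∀ b ∈ u, ¬ G.Adj a b) →
      Relation.EqvGen (CommStep G) (u ++ a :: v) (a :: (u ++ v))
  | [], _, _ => .refl _
  | b :: u, v, h => by
    have hba : CommStep G (b :: a :: (u ++ v)) (a :: b :: (u ++ v)) :=
      ⟨[], u ++ v, b, a, fun hab => h b List.mem_cons_self hab.symm, rfl, rfl⟩
    have ih := eqvGen_commStep_append_cons v fun c hc => h c (List.mem_cons_of_mem b hc)
    exact (eqvGen_commStep_cons b ih).trans _ _ _ (.rel _ _ hba)

theorem not_Dw_cons_self {a b : S} {t : List S} (ha : a ∉ t) : ¬ Dw G (a :: t) b a := by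
  rintro ⟨-, hba⟩
  cases hba with
  | cons _ h => exact ha (h.subset (by simp))
  | cons_cons _ h => exact ha (h.subset (by simp))

theorem Dw_append_cons {a b : S} {u v : List S} (hb : b ∈ u) (hab : G.Adj b a) :
    Dw G (u ++ a :: v) b a :=
  ⟨hab, List.sublist_append_iff.mpr ⟨[b], [a], rfl, List.singleton_sublist.mpr hb, by simp⟩⟩

theorem Dw_erase_iff [DecidableEq S] {w : List S} (hw : w.Nodup) (a : S) {x y : S} :
    Dw G (w.erase a) x y ↔ Dw G w x y ∧ x ≠ a ∧ y ≠ a := by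
  constructor
  · rintro ⟨hxy, hsub⟩
    exact ⟨⟨hxy, hsub.trans List.erase_sublist⟩,
      ((hw.mem_erase_iff).mp (hsub.subset (by simp))).1,
      ((hw.mem_erase_iff).mp (hsub.subset (by simp))).1⟩
  · rintro ⟨⟨hxy, hsub⟩, hx, hy⟩
    refine ⟨hxy, ?_⟩
    simpa [List.erase_of_not_mem, hx.symm, hy.symm] using hsub.erase a

theorem Dw_erase_eq [DecidableEq S] {w w' : List S} (hw : w.Nodup) (hw' : w'.Nodup)
    (hD : Dw G w = Dw G w') (a : S) : Dw G (w.erase a) = Dw G (w'.erase a) := by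
  funext x y
  rw [eq_iff_iff, Dw_erase_iff hw, Dw_erase_iff hw', hD]

theorem toFinset_erase_eq [DecidableEq S] {w w' : List S} (hw : w.Nodup) (hw' : w'.Nodup)
    (hc : w.toFinset = w'.toFinset) (a : S) : (w.erase a).toFinset = (w'.erase a).toFinset := by
  ext x
  have hmem : x ∈ w ↔ x ∈ w' := by rw [← List.mem_toFinset, hc, List.mem_toFinset]
  simp only [List.mem_toFinset, hw.mem_erase_iff, hw'.mem_erase_iff, hmem]

end

/-- Two injective words with the same content and the same induced digraph
belong to the same commutation class. -/
theorem eqvGen_of_Dw_eq {S : Type*} [DecidableEq S] (G : SimpleGraph S)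
    (w w' : List S) (hw : w.Nodup) (hw' : w'.Nodup)
    (hc : w.toFinset = w'.toFinset) (hD : Dw G w = Dw G w') :
    Relation.EqvGen (CommStep G) w w' := by
  induction w generalizing w' with
  | nil =>
    obtain rfl : w' = [] := List.toFinset_eq_empty_iff _ |>.mp hc.symm
    exact .refl _
  | cons a t ih =>
    have ha : a ∈ w' := List.mem_toFinset.mp (hc ▸ by simp)
    obtain ⟨u, v, rfl⟩ := List.append_of_mem ha
    have hau : a ∉ u := fun h => List.disjoint_of_nodup_append hw' h List.mem_cons_self
    have hfront : Relation.EqvGen (CommStep G) (u ++ a :: v) (a :: (u ++ v)) :=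
      eqvGen_commStep_append_cons v fun b hb hab =>
        not_Dw_cons_self (List.nodup_cons.mp hw).1 (hD ▸ Dw_append_cons hb hab.symm)
    have htail : Relation.EqvGen (CommStep G) t (u ++ v) := by
      have h := ih ((u ++ a :: v).erase a) (List.nodup_cons.mp hw).2 (hw'.erase a)
        (by simpa using toFinset_erase_eq hw hw' hc a) (by simpa using Dw_erase_eq hw hw' hD a)
      rwa [List.erase_append_right _ hau, List.erase_cons_head] at h
    exact (eqvGen_commStep_cons a htail).trans _ _ _ hfront.symm
end

section
/- Let D be a finite acyclic digraph on a linearly ordered vertex set ρ and let x ∈ ρ satisfy δ_D^{-1}({x}) = {x}. Then the restriction of δ_D to ρ \ {x} equals δ_{D'}, where D' is the induced subdigraph of D on ρ \ {x}. -/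
/-- `delta ρ D i` is the minimum vertex of `ρ` reachable from `i` by a
directed path in `D` (where `i` is reachable from itself). -/
noncomputable def delta {S : Type*} [LinearOrder S]
    (ρ : Finset S) (D : S → S → Prop) (i : S) : S := by
  classical
  exact if h : (ρ.filter fun j => Relation.ReflTransGen D i j).Nonempty
    then (ρ.filter fun j => Relation.ReflTransGen D i j).min' h
    else i

/-!
Let `m = δ_D(i)` for `i ≠ x`. Deleting `x` can only make `δ` larger, and `m ≠ x` because the
fibre of `x` is `{x}`. If every path from `i` to `m` passed through `x`, then `m ≤ x` (as `i`
reaches `x`) and `x = δ_D(x) ≤ m` (as `x` reaches `m`), forcing `m = x`. So some path from `i`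
to `m` avoids `x`, and `δ_{D'}(i) ≤ m`.
-/

namespace Relation.ReflTransGen

theorem restrict_or_exists_not {α : Type*} {r : α → α → Prop} {p : α → Prop} {a b : α}
    (h : ReflTransGen r a b) (ha : p a) :
    ReflTransGen (fun u v => r u v ∧ p u ∧ p v) a b ∨
      ∃ c, ¬ p c ∧ ReflTransGen r a c ∧ ReflTransGen r c b := by
  induction h using head_induction_on with
  | refl => exact .inl .refl
  | @head a c hac hcb ih =>
    by_cases hc : p c
    · rcases ih hc with hcb' | ⟨d, hd, hcd, hdb⟩
      · exact .inl (hcb'.head ⟨hac, ha, hc⟩)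
      · exact .inr ⟨d, hd, hcd.head hac, hdb⟩
    · exact .inr ⟨c, hc, .single hac, hcb⟩

end Relation.ReflTransGen

section Delta

variable {S : Type*} [LinearOrder S] {ρ ρ' : Finset S} {D D' : S → S → Prop} {i j : S}

open Relation

private theorem delta_spec (hi : i ∈ ρ) :
    delta ρ D i ∈ ρ ∧ ReflTransGen D i (delta ρ D i) ∧
      ∀ j ∈ ρ, ReflTransGen D i j → delta ρ D i ≤ j := by
  classical
  have hne : (ρ.filter fun j => ReflTransGen D i j).Nonempty :=
    ⟨i, Finset.mem_filter.2 ⟨hi, .refl⟩⟩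
  rw [delta, dif_pos hne]
  obtain ⟨hmem, hreach⟩ := Finset.mem_filter.1 (Finset.min'_mem _ hne)
  exact ⟨hmem, hreach, fun j hj hij => Finset.min'_le _ j (Finset.mem_filter.2 ⟨hj, hij⟩)⟩

theorem delta_mem (hi : i ∈ ρ) : delta ρ D i ∈ ρ := (delta_spec hi).1

theorem reflTransGen_delta (hi : i ∈ ρ) : ReflTransGen D i (delta ρ D i) := (delta_spec hi).2.1

theorem delta_le (hi : i ∈ ρ) (hj : j ∈ ρ) (hij : ReflTransGen D i j) : delta ρ D i ≤ j :=
  (delta_spec hi).2.2 j hj hij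

theorem delta_le_delta_of_subset (hρ : ρ' ⊆ ρ) (hD : D' ≤ D) (hi : i ∈ ρ') :
    delta ρ D i ≤ delta ρ' D' i :=
  delta_le (hρ hi) (hρ (delta_mem hi)) (ReflTransGen.mono hD _ _ (reflTransGen_delta hi))

end Delta

theorem delta_erase_general {S : Type*} [LinearOrder S] [DecidableEq S]
    (ρ : Finset S) (D : S → S → Prop)
    (x : S) (hx : x ∈ ρ)
    (hfiber : ∀ i ∈ ρ, delta ρ D i = x ↔ i = x) :
    ∀ i ∈ ρ.erase x,
      delta (ρ.erase x) (fun a b => D a b ∧ a ≠ x ∧ b ≠ x) i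
        = delta ρ D i := by
  intro i hi
  obtain ⟨hix, hiρ⟩ := Finset.mem_erase.1 hi
  set m := delta ρ D i
  have hmρ : m ∈ ρ := delta_mem hiρ
  have hmx : m ≠ x := fun h => hix ((hfiber i hiρ).1 h)
  have hpath : Relation.ReflTransGen (fun a b => D a b ∧ a ≠ x ∧ b ≠ x) i m := by
    rcases (reflTransGen_delta hiρ).restrict_or_exists_not (p := (· ≠ x)) hix
      with h | ⟨c, hcx, hic, hcm⟩
    · exact h
    obtain rfl : x = c := (not_not.1 hcx).symm
    have hxm : x ≤ m := (hfiber x hx).2 rfl ▸ delta_le hx hmρ hcm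
    exact absurd (le_antisymm (delta_le hiρ hx hic) hxm) hmx
  exact le_antisymm (delta_le hi (Finset.mem_erase.2 ⟨hmx, hmρ⟩) hpath)
    (delta_le_delta_of_subset (Finset.erase_subset x ρ) (fun _ _ h => h.1) hi)

/-- If `δ_D^{-1}({x}) = {x}`, then `δ_D` restricted to `ρ \ {x}` coincides
with `δ_{D'}`, where `D'` is the induced subdigraph of `D` on `ρ \ {x}`. -/
theorem delta_erase {S : Type*} [LinearOrder S] [DecidableEq S]
    (ρ : Finset S) (D : S → S → Prop)
    (hsupp : ∀ a b, D a b → a ∈ ρ ∧ b ∈ ρ)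
    (hacyc : ∀ a, ¬ Relation.TransGen D a a)
    (x : S) (hx : x ∈ ρ)
    (hfiber : ∀ i ∈ ρ, delta ρ D i = x ↔ i = x) :
    ∀ i ∈ ρ.erase x,
      delta (ρ.erase x) (fun a b => D a b ∧ a ≠ x ∧ b ≠ x) i
        = delta ρ D i :=
  delta_erase_general ρ D x hx hfiber
end

section
/- Let Γ be a finite pure Boolean cell complex (all maximal cells have the same dimension d) and ρ a face of Γ such that the face-deletion fdel_Γ(ρ) and the star st_Γ(ρ) are both shellable of dimension d. Then Γ is shellable of dimension d. -/
/-- Shellability of a (finite) Boolean cell complex, viewed as a collection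
of cells in an ambient face poset, with rank function `rk` (the rank of a cell
is one more than its dimension): either the complex is the full Boolean
lattice of faces of a single cell, or it is pure and there is a cell `σ`
contained in a unique maximal cell `τ` such that the face-deletion of `σ` is
shellable. -/
inductive Shellable {α : Type*} [PartialOrder α] (rk : α → ℕ) : Set α → Prop
  | simplex (t : α) : Shellable rk (Set.Iic t)
  | step (Γ : Set α) (σ τ : α) (hσ : σ ∈ Γ) (hle : σ ≤ τ)
      (hmax : Maximal (· ∈ Γ) τ)
      (huniq : ∀ τ' : α, Maximal (· ∈ Γ) τ' → σ ≤ τ' → τ' = τ)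
      (hpure : ∀ x y : α, Maximal (· ∈ Γ) x → Maximal (· ∈ Γ) y → rk x = rk y)
      (hrec : Shellable rk {x ∈ Γ | ¬ σ ≤ x}) : Shellable rk Γ

/-- A complex is shellable of dimension `d` if it is shellable and all its
maximal cells have rank `d + 1`, i.e. dimension `d`. -/
def ShellableOfDim {α : Type*} [PartialOrder α] (rk : α → ℕ)
    (Γ : Set α) (d : ℕ) : Prop :=
  Shellable rk Γ ∧ ∀ x : α, Maximal (· ∈ Γ) x → rk x = d + 1

section Aux

variable {α : Type*} [PartialOrder α] {rk : α → ℕ}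

/-- A shellable complex has all maximal cells of the same rank. -/
lemma shellable_pure {Δ : Set α} (h : Shellable rk Δ) {x y : α}
    (hx : Maximal (· ∈ Δ) x) (hy : Maximal (· ∈ Δ) y) : rk x = rk y := by
  cases h with
  | simplex t =>
      have hx' : x = t := le_antisymm hx.1 (hx.2 (Set.mem_Iic.mpr le_rfl) hx.1)
      have hy' : y = t := le_antisymm hy.1 (hy.2 (Set.mem_Iic.mpr le_rfl) hy.1)
      rw [hx', hy']
  | step Γ σ τ hσ hle hmax huniq hpure hrec => exact hpure x y hx hy

/-- Purity of `fdel ∪ {x ∈ T | ρ ≤ x}`. -/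
lemma aux_pure {Γ : Set α} (hfin : Γ.Finite) {d : ℕ} {ρ : α}
    (hf2 : ∀ x : α, Maximal (· ∈ {x ∈ Γ | ¬ ρ ≤ x}) x → rk x = d + 1)
    {T : Set α} (hTΓ : T ⊆ Γ)
    (inv3 : ∀ x : α, Maximal (· ∈ T) x → ρ ≤ x → rk x = d + 1) :
    ∀ x : α, Maximal (· ∈ ({x ∈ Γ | ¬ ρ ≤ x} ∪ {x ∈ T | ρ ≤ x})) x → rk x = d + 1 := by
  intro x hx
  by_cases hρx : ρ ≤ x
  · have hxT : x ∈ T := by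
      rcases hx.1 with h | h
      · exact absurd hρx h.2
      · exact h.1
    obtain ⟨m, hxm, hm⟩ := (hfin.subset hTΓ).exists_le_maximal hxT
    have hxe : x = m :=
      le_antisymm hxm (hx.2 (Or.inr ⟨hm.1, hρx.trans hxm⟩) hxm)
    rw [hxe]
    exact inv3 m hm (hρx.trans hxm)
  · have hxf : x ∈ {x ∈ Γ | ¬ ρ ≤ x} := by
      rcases hx.1 with h | h
      · exact h
      · exact absurd h.2 hρx
    exact hf2 x ⟨hxf, fun b hb hxb => hx.2 (Or.inl hb) hxb⟩

/-- The case where the remaining star is the full simplex `Iic t`. -/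
lemma aux_top {Γ : Set α} (hfin : Γ.Finite) {d : ℕ} {ρ : α}
    (hfdel : ShellableOfDim rk {x ∈ Γ | ¬ ρ ≤ x} d)
    {t : α} (htΓ : Set.Iic t ⊆ Γ) (hρt : ρ ≤ t) (hrkt : rk t = d + 1) :
    ShellableOfDim rk ({x ∈ Γ | ¬ ρ ≤ x} ∪ {x ∈ Set.Iic t | ρ ≤ x}) d := by
  have inv3 : ∀ x : α, Maximal (· ∈ Set.Iic t) x → ρ ≤ x → rk x = d + 1 := by
    intro x hx _
    have : x = t := le_antisymm hx.1 (hx.2 (Set.mem_Iic.mpr le_rfl) hx.1)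
    rw [this]; exact hrkt
  have hpureΔ := aux_pure hfin hfdel.2 htΓ inv3
  refine ⟨?_, hpureΔ⟩
  have hmaxt : Maximal
      (· ∈ ({x ∈ Γ | ¬ ρ ≤ x} ∪ {x ∈ Set.Iic t | ρ ≤ x})) t := by
    refine ⟨Or.inr ⟨Set.mem_Iic.mpr le_rfl, hρt⟩, ?_⟩
    intro b hb htb
    rcases hb with h | h
    · exact absurd (hρt.trans htb) h.2
    · exact h.1
  refine Shellable.step _ ρ t (Or.inr ⟨Set.mem_Iic.mpr hρt, le_rfl⟩) hρt hmaxt ?_ ?_ ?_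
  · intro τ' hτ' hρτ'
    have hτ't : τ' ≤ t := by
      rcases hτ'.1 with h | h
      · exact absurd hρτ' h.2
      · exact h.1
    exact le_antisymm hτ't (hτ'.2 hmaxt.1 hτ't)
  · intro x y hx hy
    rw [hpureΔ x hx, hpureΔ y hy]
  · have hset : {x ∈ ({x ∈ Γ | ¬ ρ ≤ x} ∪ {x ∈ Set.Iic t | ρ ≤ x}) | ¬ ρ ≤ x}
        = {x ∈ Γ | ¬ ρ ≤ x} := by
      ext x
      constructor
      · rintro ⟨h | h, hn⟩
        · exact h
        · exact absurd h.2 hn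
      · intro h
        exact ⟨Or.inl h, h.2⟩
    rw [hset]
    exact hfdel.1

/-- Main induction: peeling the shelling of (the remainder of) the star. -/
lemma aux_main (hBoolean : ∀ x : α, Nonempty (Set.Iic x ≃o Finset (Fin (rk x))))
    {Γ : Set α} (hfin : Γ.Finite) {d : ℕ} {ρ : α}
    (hfdel : ShellableOfDim rk {x ∈ Γ | ¬ ρ ≤ x} d)
    {T : Set α} (hT : Shellable rk T) :
    T ⊆ Γ → IsLowerSet T →
    (∀ x : α, Maximal (· ∈ T) x → ρ ≤ x → rk x = d + 1) →
    ShellableOfDim rk ({x ∈ Γ | ¬ ρ ≤ x} ∪ {x ∈ T | ρ ≤ x}) d := by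
  induction hT with
  | simplex t =>
      intro hTΓ _ inv3
      by_cases hρt : ρ ≤ t
      · exact aux_top hfin hfdel hTΓ hρt
          (inv3 t ⟨Set.mem_Iic.mpr le_rfl, fun b hb _ => hb⟩ hρt)
      · have hset : {x ∈ Γ | ¬ ρ ≤ x} ∪ {x ∈ Set.Iic t | ρ ≤ x}
            = {x ∈ Γ | ¬ ρ ≤ x} := by
          ext x
          constructor
          · rintro (h | h)
            · exact h
            · exact absurd (h.2.trans h.1) hρt
          · exact fun h => Or.inl h
        rw [hset]
        exact hfdel
  | step T σ τ hσ hle hmax huniq hpureT hrec ih =>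
      intro hTΓ hlow inv3
      have hTfin : T.Finite := hfin.subset hTΓ
      -- every element of T above σ lies below τ
      have key : ∀ x ∈ T, σ ≤ x → x ≤ τ := by
        intro x hx hσx
        obtain ⟨m, hxm, hm⟩ := hTfin.exists_le_maximal hx
        rw [← huniq m hm (hσx.trans hxm)]
        exact hxm
      have hT'Γ : {x ∈ T | ¬ σ ≤ x} ⊆ Γ := fun x hx => hTΓ hx.1
      have hlow' : IsLowerSet {x ∈ T | ¬ σ ≤ x} := by
        intro a b hba ha
        exact ⟨hlow hba ha.1, fun h => ha.2 (h.trans hba)⟩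
      by_cases hρτ : ρ ≤ τ
      · -- facet τ contains ρ
        by_cases hum : ∀ m : α, Maximal (· ∈ T) m → m = τ
        · -- τ is the unique maximal cell of T, so T = Iic τ
          have hTeq : T = Set.Iic τ := by
            apply le_antisymm
            · intro x hx
              obtain ⟨m, hxm, hm⟩ := hTfin.exists_le_maximal hx
              exact Set.mem_Iic.mpr (hum m hm ▸ hxm)
            · intro x hx
              exact hlow hx hmax.1
          rw [hTeq]
          exact aux_top hfin hfdel (hTeq ▸ hTΓ) hρτ (inv3 τ hmax hρτ)
        · push_neg at hum
          obtain ⟨m₀, hm₀, hm₀τ⟩ := hum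
          have hm₀T' : m₀ ∈ {x ∈ T | ¬ σ ≤ x} :=
            ⟨hm₀.1, fun h => hm₀τ (huniq m₀ hm₀ h)⟩
          have hm₀max' : Maximal (· ∈ {x ∈ T | ¬ σ ≤ x}) m₀ :=
            ⟨hm₀T', fun b hb hmb => hm₀.2 hb.1 hmb⟩
          have hrkτ : rk τ = d + 1 := inv3 τ hmax hρτ
          have inv3' : ∀ x : α, Maximal (· ∈ {x ∈ T | ¬ σ ≤ x}) x → ρ ≤ x →
              rk x = d + 1 := by
            intro x hx _
            calc rk x = rk m₀ := shellable_pure hrec hx hm₀max'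
              _ = rk τ := hpureT m₀ τ hm₀ hmax
              _ = d + 1 := hrkτ
          have IH := ih hT'Γ hlow' inv3'
          -- construct the join σ⁺ of σ and ρ inside the Boolean interval Iic τ
          obtain ⟨e⟩ := hBoolean τ
          set c : Set.Iic τ := e.symm (e ⟨σ, hle⟩ ⊔ e ⟨ρ, hρτ⟩) with hc
          have hσc : σ ≤ (c : α) := by
            have : (⟨σ, hle⟩ : Set.Iic τ) ≤ c := e.le_symm_apply.mpr le_sup_left
            exact this
          have hρc : ρ ≤ (c : α) := by
            have : (⟨ρ, hρτ⟩ : Set.Iic τ) ≤ c := e.le_symm_apply.mpr le_sup_right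
            exact this
          have hcτ : (c : α) ≤ τ := c.2
          have hjoin : ∀ x : α, x ≤ τ → σ ≤ x → ρ ≤ x → (c : α) ≤ x := by
            intro x hxτ hσx hρx
            have : c ≤ (⟨x, hxτ⟩ : Set.Iic τ) := by
              apply e.symm_apply_le.mpr
              exact sup_le (e.le_iff_le.mpr hσx) (e.le_iff_le.mpr hρx)
            exact this
          have hpureΔ := aux_pure hfin hfdel.2 hTΓ inv3
          have hcT : (c : α) ∈ T := hlow hcτ hmax.1
          have hmaxτΔ : Maximal
              (· ∈ ({x ∈ Γ | ¬ ρ ≤ x} ∪ {x ∈ T | ρ ≤ x})) τ := by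
            refine ⟨Or.inr ⟨hmax.1, hρτ⟩, ?_⟩
            intro b hb hτb
            rcases hb with h | h
            · exact absurd (hρτ.trans hτb) h.2
            · exact hmax.2 h.1 hτb
          refine ⟨Shellable.step _ (c : α) τ (Or.inr ⟨hcT, hρc⟩) hcτ hmaxτΔ ?_ ?_ ?_,
            hpureΔ⟩
          · -- uniqueness of the maximal cell above σ⁺
            intro τ' hτ' hcτ'
            have hρτ' : ρ ≤ τ' := hρc.trans hcτ'
            have hτ'T : τ' ∈ T := by
              rcases hτ'.1 with h | h
              · exact absurd hρτ' h.2
              · exact h.1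
            have hτ'max : Maximal (· ∈ T) τ' := by
              refine ⟨hτ'T, fun b hb hτ'b => ?_⟩
              exact hτ'.2 (Or.inr ⟨hb, hρτ'.trans hτ'b⟩) hτ'b
            exact huniq τ' hτ'max (hσc.trans hcτ')
          · intro x y hx hy
            rw [hpureΔ x hx, hpureΔ y hy]
          · -- the remainder is fdel ∪ {x ∈ T' | ρ ≤ x}
            have hset : {x ∈ ({x ∈ Γ | ¬ ρ ≤ x} ∪ {x ∈ T | ρ ≤ x}) | ¬ (c : α) ≤ x}
                = {x ∈ Γ | ¬ ρ ≤ x} ∪ {x ∈ {x ∈ T | ¬ σ ≤ x} | ρ ≤ x} := by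
              ext x
              constructor
              · rintro ⟨h | h, hn⟩
                · exact Or.inl h
                · refine Or.inr ⟨⟨h.1, fun hσx => ?_⟩, h.2⟩
                  exact hn (hjoin x (key x h.1 hσx) hσx h.2)
              · rintro (h | h)
                · exact ⟨Or.inl h, fun hcx => h.2 (hρc.trans hcx)⟩
                · exact ⟨Or.inr ⟨h.1.1, h.2⟩, fun hcx => h.1.2 (hσc.trans hcx)⟩
            rw [hset]
            exact IH.1
      · -- the peeled facet τ does not contain ρ: nothing changes
        have hset : {x ∈ Γ | ¬ ρ ≤ x} ∪ {x ∈ T | ρ ≤ x}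
            = {x ∈ Γ | ¬ ρ ≤ x} ∪ {x ∈ {x ∈ T | ¬ σ ≤ x} | ρ ≤ x} := by
          ext x
          constructor
          · rintro (h | h)
            · exact Or.inl h
            · refine Or.inr ⟨⟨h.1, fun hσx => ?_⟩, h.2⟩
              exact hρτ (h.2.trans (key x h.1 hσx))
          · rintro (h | h)
            · exact Or.inl h
            · exact Or.inr ⟨h.1.1, h.2⟩
        have inv3' : ∀ x : α, Maximal (· ∈ {x ∈ T | ¬ σ ≤ x}) x → ρ ≤ x →
            rk x = d + 1 := by
          intro x hx hρx
          obtain ⟨m, hxm, hm⟩ := hTfin.exists_le_maximal hx.1.1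
          have hmT' : m ∈ {x ∈ T | ¬ σ ≤ x} := by
            refine ⟨hm.1, fun hσm => ?_⟩
            exact hρτ ((hρx.trans hxm).trans (huniq m hm hσm ▸ le_rfl))
          have hxe : x = m := le_antisymm hxm (hx.2 hmT' hxm)
          rw [hxe]
          exact inv3 m hm (hρx.trans hxm)
        rw [hset]
        exact ih hT'Γ hlow' inv3'

end Aux

/-- If `Γ` is a finite pure Boolean cell complex of dimension `d` and `ρ` is a
face such that the face-deletion and the star of `ρ` are both shellable of
dimension `d`, then `Γ` is shellable of dimension `d`. -/
theorem shellable_of_fdel_and_star {α : Type*} [PartialOrder α] (rk : α → ℕ)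
    (hBoolean : ∀ x : α, Nonempty (Set.Iic x ≃o Finset (Fin (rk x))))
    (Γ : Set α) (hfin : Γ.Finite)
    (hlower : ∀ x ∈ Γ, ∀ y : α, y ≤ x → y ∈ Γ)
    (d : ℕ) (hpure : ∀ x : α, Maximal (· ∈ Γ) x → rk x = d + 1)
    (ρ : α) (hρ : ρ ∈ Γ)
    (hfdel : ShellableOfDim rk {x ∈ Γ | ¬ ρ ≤ x} d)
    (hstar : ShellableOfDim rk {x ∈ Γ | ∃ y ∈ Γ, ρ ≤ y ∧ x ≤ y} d) :
    ShellableOfDim rk Γ d := by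
  set S : Set α := {x ∈ Γ | ∃ y ∈ Γ, ρ ≤ y ∧ x ≤ y} with hSdef
  have hSΓ : S ⊆ Γ := fun x hx => hx.1
  have hSlow : IsLowerSet S := by
    rintro a b hba ⟨haΓ, y, hyΓ, hρy, hay⟩
    exact ⟨hlower a haΓ b hba, y, hyΓ, hρy, hba.trans hay⟩
  have inv3 : ∀ x : α, Maximal (· ∈ S) x → ρ ≤ x → rk x = d + 1 :=
    fun x hx _ => hstar.2 x hx
  have h := aux_main hBoolean hfin hfdel hstar.1 hSΓ hSlow inv3
  have hset : {x ∈ Γ | ¬ ρ ≤ x} ∪ {x ∈ S | ρ ≤ x} = Γ := by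
    ext x
    constructor
    · rintro (hx | hx)
      · exact hx.1
      · exact hx.1.1
    · intro hx
      by_cases hρx : ρ ≤ x
      · exact Or.inr ⟨⟨hx, x, hx, hρx, le_rfl⟩, hρx⟩
      · exact Or.inl ⟨hx, hρx⟩
  rwa [hset] at h
end

section
/- Let Δ be a finite simplicial complex on vertex set S and P a partial order on S. Then for any word w ∈ Γ(Δ,P), the star of w in Γ(Δ,P) equals Γ(st_Δ(c(w)), P + w), where P + w is the transitive closure of P together with the relations imposed by the letter order of w. -/
/-!
If a strict order `r` is compatible with the letter order of a word `l`, then `r` together with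
that letter order generates a strict order: a chain of `r`-steps between two letters of `l` is
already absorbed by the order of `l`, so every path collapses to `r` or to `r^= ∘ l ∘ r^=`.
Hence if `w` and `u` are subwords of a face `v`, a cycle through `P + w` and `u` would be a cycle
of `P + v`. Conversely, if `u` respects `P + w`, then `P`, `w` and `u` generate a strict order,
and any linear extension of it on `c(w) ∪ c(u)` is a face containing both `w` and `u`.
-/

open Relation List

namespace Relation

variable {α : Type*} {r s : α → α → Prop}

theorem transGen_or_imp_reflGen [IsTrans α r]
    (hs : ∀ {a b c d}, s a b → ReflGen r b c → s c d → s a d) {a b : α}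
    (h : TransGen (fun x y => r x y ∨ s x y) a b) :
    r a b ∨ ∃ a' b', ReflGen r a a' ∧ s a' b' ∧ ReflGen r b' b := by
  induction h with
  | single h => exact h.imp id fun h => ⟨_, _, .refl, h, .refl⟩
  | tail _ hbc ih =>
    rcases ih with hab | ⟨a', b', ha, hs', hb⟩ <;> rcases hbc with hbc | hbc
    · exact .inl (_root_.trans hab hbc)
    · exact .inr ⟨_, _, .single hab, hbc, .refl⟩
    · exact .inr ⟨a', b', ha, hs', trans_of (ReflGen r) hb (.single hbc)⟩
    · exact .inr ⟨a', _, ha, hs hs' hb hbc, .refl⟩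

theorem isStrictOrder_transGen_or [IsStrictOrder α r]
    (hs : ∀ {a b c d}, s a b → ReflGen r b c → s c d → s a d)
    (hsr : ∀ {a b}, s a b → ¬ ReflGen r b a) :
    IsStrictOrder α (TransGen fun x y => r x y ∨ s x y) where
  irrefl a h := by
    rcases transGen_or_imp_reflGen hs h with h | ⟨a', b', ha, hs', hb⟩
    · exact irrefl a h
    · exact hsr hs' (trans_of (ReflGen r) hb ha)

end Relation

namespace List

variable {α : Type*} {l : List α} {a b c : α}

theorem pair_sublist_iff_getElem : [a, b] <+ l ↔
    ∃ (i j : ℕ) (hi : i < l.length) (hj : j < l.length), i < j ∧ l[i] = a ∧ l[j] = b := by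
  constructor
  · intro h
    exact (pairwise_iff_forall_sublist (R := fun a b => ∃ (i j : ℕ) (hi : i < l.length)
      (hj : j < l.length), i < j ∧ l[i] = a ∧ l[j] = b)).1
      (pairwise_iff_getElem.2 fun i j hi hj hij => ⟨i, j, hi, hj, hij, rfl, rfl⟩) h
  · rintro ⟨i, j, hi, hj, hij, rfl, rfl⟩
    exact pairwise_iff_getElem.1 (pairwise_iff_forall_sublist.2 id) i j hi hj hij

theorem Nodup.pair_sublist_trans (hl : l.Nodup) (hab : [a, b] <+ l) (hbc : [b, c] <+ l) :
    [a, c] <+ l := by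
  obtain ⟨i, j, hi, hj, hij, rfl, rfl⟩ := pair_sublist_iff_getElem.1 hab
  obtain ⟨j', k, hj', hk, hjk, hjj', rfl⟩ := pair_sublist_iff_getElem.1 hbc
  obtain rfl : j' = j := (hl.getElem_inj_iff).1 hjj'
  exact pair_sublist_iff_getElem.2 ⟨i, k, hi, hk, hij.trans hjk, rfl, rfl⟩

theorem pair_sublist_or_pair_sublist (ha : a ∈ l) (hb : b ∈ l) (hab : a ≠ b) :
    [a, b] <+ l ∨ [b, a] <+ l := by
  obtain ⟨i, hi, rfl⟩ := mem_iff_getElem.1 ha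
  obtain ⟨j, hj, rfl⟩ := mem_iff_getElem.1 hb
  rcases lt_trichotomy i j with hij | rfl | hji
  · exact .inl (pair_sublist_iff_getElem.2 ⟨i, j, hi, hj, hij, rfl, rfl⟩)
  · exact absurd rfl hab
  · exact .inr (pair_sublist_iff_getElem.2 ⟨j, i, hj, hi, hji, rfl, rfl⟩)

theorem Nodup.isStrictOrder_transGen_or_pair_sublist {r : α → α → Prop} [IsStrictOrder α r]
    (hl : l.Nodup) (hlr : l.Pairwise fun a b => ¬ r b a) :
    IsStrictOrder α (TransGen fun x y => r x y ∨ [x, y] <+ l) := by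
  have hlr' : ∀ {a b}, [a, b] <+ l → ¬ r b a := pairwise_iff_forall_sublist.1 hlr
  refine isStrictOrder_transGen_or ?_ ?_
  · rintro a b c d hab (_ | hbc) hcd
    · exact hl.pair_sublist_trans hab hcd
    · have hb : b ∈ l := hab.subset (by simp)
      have hc : c ∈ l := hcd.subset (by simp)
      rcases pair_sublist_or_pair_sublist hb hc (ne_of_irrefl hbc) with hbc' | hcb
      · exact hl.pair_sublist_trans (hl.pair_sublist_trans hab hbc') hcd
      · exact absurd hbc (hlr' hcb)
  · rintro a b hab (_ | hba)
    · exact nodup_iff_sublist.1 hl a hab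
    · exact hlr' hab hba

end List

theorem Finset.exists_topologicalSort {α : Type*} [DecidableEq α] {r : α → α → Prop}
    [IsStrictOrder α r] (F : Finset α) :
    ∃ v : List α, v.Nodup ∧ v.toFinset = F ∧ v.Pairwise (fun a b => ¬ r b a) ∧
      ∀ m : List α, m.Nodup → (∀ x ∈ m, x ∈ F) → m.Pairwise r → m <+ v := by
  have : IsPartialOrder α (ReflGen r) :=
    { (inferInstance : IsPreorder α (ReflGen r)) with
      antisymm := by
        rintro a b (_ | hab) (_ | hba)
        iterate 3 rfl
        exact absurd (_root_.trans hab hba) (irrefl a) }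
  obtain ⟨s, hlin, hrs⟩ := extend_partialOrder (ReflGen r)
  classical
  refine ⟨F.sort s, F.sort_nodup s, F.sort_toFinset s, ?_, fun m hm hmF hmr => ?_⟩
  · refine ((F.pairwise_sort s).and (F.sort_nodup s)).imp fun ⟨hab, hne⟩ hba => hne ?_
    exact antisymm hab (hrs _ _ (.single hba))
  · exact sublist_of_subperm_of_pairwise
      (subperm_of_subset hm fun x hx => (mem_sort s).2 (hmF x hx))
      (hmr.imp fun h => hrs _ _ (.single h)) (F.pairwise_sort s)

section LinearExtension

variable {α : Type*} [Preorder α] {u v w : List α}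

theorem List.Nodup.pairwise_not_transGen_of_sublist (hv : v.Nodup)
    (hvP : v.Pairwise fun a b => ¬ b < a) (hwv : w <+ v) (huv : u <+ v) :
    u.Pairwise fun a b => ¬ TransGen (fun x y => x < y ∨ [x, y] <+ w) b a := by
  have := hv.isStrictOrder_transGen_or_pair_sublist hvP
  refine pairwise_iff_forall_sublist.2 fun {a b} hab hba => ?_
  have hba' : TransGen (fun x y => x < y ∨ [x, y] <+ v) b a :=
    TransGen.mono (fun _ _ => Or.imp_right (·.trans hwv)) _ _ hba
  exact _root_.irrefl a (hba'.head (.inr (hab.trans huv)))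

theorem exists_common_linearExtension [DecidableEq α] (hw : w.Nodup)
    (hwP : w.Pairwise fun a b => ¬ b < a) (hu : u.Nodup)
    (huP : u.Pairwise fun a b => ¬ TransGen (fun x y => x < y ∨ [x, y] <+ w) b a) :
    ∃ v : List α, v.Nodup ∧ v.toFinset = w.toFinset ∪ u.toFinset ∧
      v.Pairwise (fun a b => ¬ b < a) ∧ w <+ v ∧ u <+ v := by
  have := hw.isStrictOrder_transGen_or_pair_sublist hwP
  have := hu.isStrictOrder_transGen_or_pair_sublist huP
  obtain ⟨v, hv, hvF, hvP, hsub⟩ := (w.toFinset ∪ u.toFinset).exists_topologicalSort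
    (r := TransGen fun x y => TransGen (fun x y => x < y ∨ [x, y] <+ w) x y ∨ [x, y] <+ u)
  refine ⟨v, hv, hvF, hvP.imp fun h hlt => h (.single (.inl (.single (.inl hlt)))),
    hsub w hw (fun _ hx => by simp [hx]) ?_, hsub u hu (fun _ hx => by simp [hx]) ?_⟩
  · exact pairwise_iff_forall_sublist.2 fun h => .single (.inl (.single (.inr h)))
  · exact pairwise_iff_forall_sublist.2 fun h => .single (.inr h)

end LinearExtension

theorem star_eq_gamma_star_general {S : Type*} [DecidableEq S] [PartialOrder S]
    (Δ : Set (Finset S))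
    (hdown : ∀ σ ∈ Δ, ∀ τ ⊆ σ, τ ∈ Δ)
    (w : List S) (hw : w.Nodup ∧ w.toFinset ∈ Δ ∧
      w.Pairwise fun a b => ¬ b < a) :
    {u : List S | (u.Nodup ∧ u.toFinset ∈ Δ ∧
        u.Pairwise fun a b => ¬ b < a) ∧
      ∃ v : List S, (v.Nodup ∧ v.toFinset ∈ Δ ∧
        v.Pairwise fun a b => ¬ b < a) ∧ w.Sublist v ∧ u.Sublist v}
    = {u : List S | u.Nodup ∧ w.toFinset ∪ u.toFinset ∈ Δ ∧
        u.Pairwise fun a b =>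
          ¬ Relation.TransGen (fun x y => x < y ∨ [x, y].Sublist w) b a} := by
  obtain ⟨hw, -, hwP⟩ := hw
  ext u
  constructor
  · rintro ⟨⟨hu, -, -⟩, v, ⟨hv, hvΔ, hvP⟩, hwv, huv⟩
    refine ⟨hu, hdown _ hvΔ _ ?_, hv.pairwise_not_transGen_of_sublist hvP hwv huv⟩
    exact Finset.union_subset (Multiset.toFinset_subset.2 hwv.subset)
      (Multiset.toFinset_subset.2 huv.subset)
  · rintro ⟨hu, hΔ, huP⟩
    obtain ⟨v, hv, hvF, hvP, hwv, huv⟩ := exists_common_linearExtension hw hwP hu huP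
    exact ⟨⟨hu, hdown _ hΔ _ Finset.subset_union_right,
      huP.imp fun h hlt => h (.single (.inl hlt))⟩, v, ⟨hv, hvF ▸ hΔ, hvP⟩, hwv, huv⟩

/-- For a simplicial complex `Δ` on a partially ordered vertex set and an
injective word `w` in `Γ(Δ,P)`, the star of `w` in `Γ(Δ,P)` equals
`Γ(st_Δ(c(w)), P + w)`, where `P + w` is the transitive closure of `P`
together with the relations given by the letter order of `w`. -/
theorem star_eq_gamma_star {S : Type*} [DecidableEq S] [PartialOrder S]
    (Δ : Set (Finset S)) (hfin : Δ.Finite)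
    (hdown : ∀ σ ∈ Δ, ∀ τ ⊆ σ, τ ∈ Δ)
    (w : List S) (hw : w.Nodup ∧ w.toFinset ∈ Δ ∧
      w.Pairwise fun a b => ¬ b < a) :
    {u : List S | (u.Nodup ∧ u.toFinset ∈ Δ ∧
        u.Pairwise fun a b => ¬ b < a) ∧
      ∃ v : List S, (v.Nodup ∧ v.toFinset ∈ Δ ∧
        v.Pairwise fun a b => ¬ b < a) ∧ w.Sublist v ∧ u.Sublist v}
    = {u : List S | u.Nodup ∧ w.toFinset ∪ u.toFinset ∈ Δ ∧
        u.Pairwise fun a b =>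
          ¬ Relation.TransGen (fun x y => x < y ∨ [x, y].Sublist w) b a} :=
  star_eq_gamma_star_general Δ hdown w hw
end

section
/- Let Δ be a finite shellable simplicial complex on vertex set S and P a partial order on S. Then the Boolean cell complex Γ(Δ,P) of injective words w with content in Δ that are linear extensions of P restricted to their content is shellable. -/
/-- Injective words over `S`: lists ordered by the subword (sublist)
relation. -/
def IWord (S : Type*) : Type _ := List S

/-- The underlying list of an injective word. -/
def IWord.toList {S : Type*} (w : IWord S) : List S := w

instance {S : Type*} : PartialOrder (IWord S) where
  le v w := v.toList.Sublist w.toList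
  le_refl w := List.Sublist.refl _
  le_trans _ _ _ := List.Sublist.trans
  le_antisymm _ _ := List.Sublist.antisymm


section Shelling

variable {α : Type*}

/-- A list of pairs `(τ, σ)` read as a sequence of cells `τ` added to the complex `O`: the faces
of each `τ` that are new form the interval `[σ, τ]`. -/
def IsShellingFrom (le : α → α → Prop) (O : Set α) : List (α × α) → Prop
  | [] => True
  | p :: L => le p.2 p.1 ∧ (∀ x, le x p.1 → (x ∈ O ↔ ¬ le p.2 x)) ∧
      IsShellingFrom le (O ∪ {x | le x p.1}) L

variable {le : α → α → Prop}

theorem IsShellingFrom.append {O : Set α} {L₁ L₂ : List (α × α)}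
    (h₁ : IsShellingFrom le O L₁) (h₂ : IsShellingFrom le (O ∪ {x | ∃ p ∈ L₁, le x p.1}) L₂) :
    IsShellingFrom le O (L₁ ++ L₂) := by
  induction L₁ generalizing O with
  | nil => simpa using h₂
  | cons p L₁ ih =>
    refine ⟨h₁.1, h₁.2.1, ih h₁.2.2 ?_⟩
    convert h₂ using 1
    ext x
    simp only [Set.mem_union, Set.mem_ofPred_eq, List.mem_cons, exists_eq_or_imp]
    tauto

theorem IsShellingFrom.congr {O O' : Set α} {L : List (α × α)} (h : IsShellingFrom le O L)
    (hO : ∀ p ∈ L, ∀ x, le x p.1 → (x ∈ O ↔ x ∈ O')) : IsShellingFrom le O' L := by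
  induction L generalizing O O' with
  | nil => trivial
  | cons p L ih =>
    refine ⟨h.1, fun x hx => (hO p (by simp) x hx).symm.trans (h.2.1 x hx), ih h.2.2 ?_⟩
    intro q hq x hx
    simp only [Set.mem_union, Set.mem_ofPred_eq, hO q (List.mem_cons_of_mem p hq) x hx]

theorem IsShellingFrom.snd_le {O : Set α} {L : List (α × α)} (h : IsShellingFrom le O L)
    {p : α × α} (hp : p ∈ L) : le p.2 p.1 := by
  induction L generalizing O with
  | nil => simp at hp
  | cons q L ih =>
    rcases List.mem_cons.1 hp with rfl | hp
    exacts [h.1, ih h.2.2 hp]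

theorem IsShellingFrom.snd_notMem (refl : ∀ x, le x x) {O : Set α} {L : List (α × α)}
    (h : IsShellingFrom le O L) {p : α × α} (hp : p ∈ L) : p.2 ∉ O := by
  induction L generalizing O with
  | nil => simp at hp
  | cons q L ih =>
    rcases List.mem_cons.1 hp with rfl | hp
    · exact fun hO => (h.2.1 p.2 h.1).1 hO (refl _)
    · exact fun hO => ih h.2.2 hp (Or.inl hO)

theorem IsShellingFrom.map (Inv : Set α → Set α → Prop) (f : α × α → α × α)
    {O O' : Set α} {L : List (α × α)}
    (hstep : ∀ p ∈ L, ∀ P P', Inv P P' → le p.2 p.1 → (∀ x, le x p.1 → (x ∈ P ↔ ¬ le p.2 x)) →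
      le (f p).2 (f p).1 ∧ (∀ x, le x (f p).1 → (x ∈ P' ↔ ¬ le (f p).2 x)) ∧
        Inv (P ∪ {x | le x p.1}) (P' ∪ {x | le x (f p).1}))
    (h : IsShellingFrom le O L) (hInv : Inv O O') : IsShellingFrom le O' (L.map f) := by
  induction L generalizing O O' with
  | nil => trivial
  | cons p L ih =>
    obtain ⟨h₁, h₂, h₃⟩ := hstep p (by simp) O O' hInv h.1 h.2.1
    exact ⟨h₁, h₂, ih (fun q hq => hstep q (List.mem_cons_of_mem p hq)) h.2.2 h₃⟩

end Shelling

section Shellable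

variable {α : Type*} [PartialOrder α] {rk : α → ℕ}

theorem Shellable.pure {Γ : Set α} (h : Shellable rk Γ) :
    ∀ x y, Maximal (· ∈ Γ) x → Maximal (· ∈ Γ) y → rk x = rk y := by
  cases h with
  | simplex t =>
    intro x y hx hy
    rw [hx.eq_of_le le_rfl hx.1, hy.eq_of_le le_rfl hy.1]
  | step _ _ _ _ _ _ _ hpure _ => exact hpure

theorem rk_eq_of_maximal_union_Iic {O : Set α} {τ m : α}
    (hrk : ∀ m, Maximal (· ∈ O) m → rk m = rk τ) (hm : Maximal (· ∈ O ∪ Set.Iic τ) m) :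
    rk m = rk τ := by
  rcases hm.1 with hmO | hmτ
  · exact hrk m (hm.mono (fun _ => Or.inl) hmO)
  · rw [hm.eq_of_le (Or.inr le_rfl) hmτ]

theorem shellable_union_Iic {O : Set α} {σ τ : α} (hO : O.Nonempty → Shellable rk O)
    (hlow : IsLowerSet O) (hrk : ∀ m, Maximal (· ∈ O) m → rk m = rk τ) (hστ : σ ≤ τ)
    (hint : ∀ x ≤ τ, x ∈ O ↔ ¬ σ ≤ x) : Shellable rk (O ∪ Set.Iic τ) := by
  have hσO : σ ∉ O := fun h => (hint σ hστ).1 h le_rfl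
  have hσ_le : ∀ x ∈ O, ¬ σ ≤ x := fun x hx hσx => hσO (hlow hσx hx)
  rcases O.eq_empty_or_nonempty with rfl | hne
  · simpa using Shellable.simplex (rk := rk) τ
  have hτ : Maximal (· ∈ O ∪ Set.Iic τ) τ := by
    refine ⟨Or.inr le_rfl, fun y hy hτy => ?_⟩
    rcases hy with hy | hy
    · exact absurd (hστ.trans hτy) (hσ_le y hy)
    · exact hy
  have hdel : {x ∈ O ∪ Set.Iic τ | ¬ σ ≤ x} = O := by
    ext x
    constructor
    · rintro ⟨hx | hx, hσx⟩
      exacts [hx, (hint x hx).2 hσx]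
    · exact fun hx => ⟨Or.inl hx, hσ_le x hx⟩
  refine Shellable.step _ σ τ (Or.inr hστ) hστ hτ ?_ ?_ (by rw [hdel]; exact hO hne)
  · rintro τ' hτ' hστ'
    rcases hτ'.1 with h | h
    · exact absurd hστ' (hσ_le τ' h)
    · exact hτ'.eq_of_le hτ.1 h
  · intro x y hx hy
    rw [rk_eq_of_maximal_union_Iic hrk hx, rk_eq_of_maximal_union_Iic hrk hy]

theorem Shellable.union_of_isShellingFrom {N : ℕ} {O : Set α} {L : List (α × α)}
    (hO : O.Nonempty → Shellable rk O) (hlow : IsLowerSet O)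
    (hrk : ∀ m, Maximal (· ∈ O) m → rk m = N) (hLrk : ∀ p ∈ L, rk p.1 = N)
    (hL : IsShellingFrom (· ≤ ·) O L) (hne : O.Nonempty ∨ L ≠ []) :
    Shellable rk (O ∪ {x | ∃ p ∈ L, x ≤ p.1}) := by
  induction L generalizing O with
  | nil => simpa using hO (hne.resolve_right (by simp))
  | cons p L ih =>
    have hpN := hLrk p (by simp)
    have key := ih (O := O ∪ Set.Iic p.1)
      (fun _ => shellable_union_Iic hO hlow (hpN ▸ hrk) hL.1 hL.2.1)
      (hlow.union (isLowerSet_Iic p.1))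
      (fun m hm => (rk_eq_of_maximal_union_Iic (hpN ▸ hrk) hm).trans hpN)
      (fun q hq => hLrk q (List.mem_cons_of_mem p hq)) hL.2.2
      (Or.inl ⟨p.1, Or.inr le_rfl⟩)
    convert key using 1
    ext x
    simp only [Set.mem_union, Set.mem_ofPred_eq, List.mem_cons, exists_eq_or_imp, Set.mem_Iic]
    tauto

theorem le_of_unique_maximal_above {Γ : Set α} {σ τ y : α} (hfin : Γ.Finite)
    (huniq : ∀ τ', Maximal (· ∈ Γ) τ' → σ ≤ τ' → τ' = τ) (hy : y ∈ Γ) (hσy : σ ≤ y) : y ≤ τ := by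
  obtain ⟨z, hyz, hz⟩ := hfin.exists_le_maximal hy
  exact huniq z hz (hσy.trans hyz) ▸ hyz

theorem eq_Iic_or_maximal_of_maximal_deletion {Γ : Set α} {σ τ : α} (hfin : Γ.Finite)
    (hlow : IsLowerSet Γ) (hrk : StrictMono rk) (hτ : Maximal (· ∈ Γ) τ)
    (huniq : ∀ τ', Maximal (· ∈ Γ) τ' → σ ≤ τ' → τ' = τ)
    (hpure : ∀ x y, Maximal (· ∈ Γ) x → Maximal (· ∈ Γ) y → rk x = rk y)
    (hpure' : ∀ x y, Maximal (· ∈ {x ∈ Γ | ¬ σ ≤ x}) x →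
      Maximal (· ∈ {x ∈ Γ | ¬ σ ≤ x}) y → rk x = rk y) :
    Γ = Set.Iic τ ∨ ∀ m, Maximal (· ∈ {x ∈ Γ | ¬ σ ≤ x}) m → Maximal (· ∈ Γ) m := by
  have le_τ : ∀ y ∈ Γ, σ ≤ y → y ≤ τ := fun y => le_of_unique_maximal_above hfin huniq
  have lt_τ : ∀ m, Maximal (· ∈ {x ∈ Γ | ¬ σ ≤ x}) m → ¬ Maximal (· ∈ Γ) m → m < τ := by
    intro m hm hm'
    obtain ⟨y, hy, hmy, hym⟩ : ∃ y ∈ Γ, m ≤ y ∧ ¬ y ≤ m := by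
      simpa [Maximal, hm.1.1] using hm'
    have hσy : σ ≤ y := by_contra fun h => hym (hm.2 ⟨hy, h⟩ hmy)
    exact lt_of_le_of_ne (hmy.trans (le_τ y hy hσy))
      (fun h => hym (h ▸ le_τ y hy hσy))
  by_contra! h
  obtain ⟨hne, m, hm, hm'⟩ := h
  refine hne (Set.Subset.antisymm (fun x hx => ?_) (fun x hx => hlow hx hτ.1))
  by_cases hσx : σ ≤ x
  · exact le_τ x hx hσx
  obtain ⟨m', hxm', hm'max⟩ := (hfin.subset (fun _ h => h.1)).exists_le_maximal
    (show x ∈ {x ∈ Γ | ¬ σ ≤ x} from ⟨hx, hσx⟩)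
  refine hxm'.trans (lt_τ m' hm'max fun h => ?_).le
  have := hrk (lt_τ m hm hm')
  rw [hpure' m m' hm hm'max, hpure m' τ h hτ] at this
  exact lt_irrefl _ this

end Shellable

section Lists

open List

variable {α : Type*}

theorem List.sublist_cons_iff_of_notMem {a : α} {x w : List α} (hax : a ∉ x) :
    x <+ a :: w ↔ x <+ w :=
  ⟨fun h => (sublist_cons_iff.1 h).resolve_right (by rintro ⟨r, rfl, -⟩; simp at hax),
    fun h => h.trans (sublist_cons_self a w)⟩

theorem List.Sublist.toFinset_subset [DecidableEq α] {x y : List α} (h : x <+ y) :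
    x.toFinset ⊆ y.toFinset :=
  fun _ hb => mem_toFinset.2 (h.subset (mem_toFinset.1 hb))

def intervalHeads (w r : List α) : Set α := {c | ∃ x, x <+ w ∧ r <+ x ∧ x.head? = some c}

theorem mem_of_mem_intervalHeads {w r : List α} {c : α} (hc : c ∈ intervalHeads w r) :
    c ∈ w := by
  obtain ⟨x, hxw, -, hc⟩ := hc
  exact hxw.subset (mem_of_mem_head? hc)

theorem intervalHeads_cons_cons {a : α} {w r : List α} (haw : a ∉ w) (hrw : r <+ w) :
    intervalHeads (a :: w) (a :: r) = {a} := by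
  ext c
  constructor
  · rintro ⟨x, hxw, hrx, hc⟩
    rcases sublist_cons_iff.1 hxw with h | ⟨y, rfl, -⟩
    · exact absurd (h.subset (hrx.subset mem_cons_self)) haw
    · simpa using hc.symm
  · rintro rfl
    exact ⟨c :: r, hrw.cons_cons c, Sublist.refl _, rfl⟩

theorem intervalHeads_cons {a : α} {w r : List α} (har : a ∉ r) (hrw : r <+ w) :
    intervalHeads (a :: w) r = insert a (intervalHeads w r) := by
  ext c
  constructor
  · rintro ⟨x, hxw, hrx, hc⟩
    rcases sublist_cons_iff.1 hxw with h | ⟨y, rfl, -⟩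
    · exact Or.inr ⟨x, h, hrx, hc⟩
    · exact Or.inl (by simpa using hc.symm)
  · rintro (rfl | ⟨x, hxw, hrx, hc⟩)
    · exact ⟨c :: r, hrw.cons_cons c, sublist_cons_self c r, rfl⟩
    · exact ⟨x, hxw.trans (sublist_cons_self a w), hrx, hc⟩

end Lists

section Words

open List

variable {S : Type*} [PartialOrder S]

def Admissible (x : List S) : Prop := x.Nodup ∧ x.Pairwise fun a b => ¬ b < a

theorem Admissible.sublist {x y : List S} (hy : Admissible y) (h : x <+ y) : Admissible x :=
  ⟨hy.1.sublist h, hy.2.sublist h⟩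

theorem admissible_cons {a : S} {x : List S} :
    Admissible (a :: x) ↔ (a ∉ x ∧ ∀ b ∈ x, ¬ b < a) ∧ Admissible x := by
  simp only [Admissible, List.nodup_cons, List.pairwise_cons]
  tauto

/-- The letter goes right before the first letter above it. -/
theorem Admissible.exists_insert {x : List S} (hx : Admissible x) {e : S} (he : e ∉ x) :
    ∃ y, Admissible y ∧ x <+ y ∧ ∀ b, b ∈ y ↔ b = e ∨ b ∈ x := by
  induction x with
  | nil => exact ⟨[e], by simp [Admissible], by simp, by simp⟩
  | cons g x ih =>
    obtain ⟨⟨hgx, hg⟩, hx'⟩ := admissible_cons.1 hx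
    by_cases heg : e < g
    · refine ⟨e :: g :: x, admissible_cons.2 ⟨⟨he, ?_⟩, hx⟩, List.sublist_cons_self _ _,
        fun b => List.mem_cons⟩
      rintro b (_ | ⟨_, hb⟩) hbe
      · exact lt_asymm heg hbe
      · exact hg b hb (hbe.trans heg)
    · obtain ⟨y, hy, hxy, hmem⟩ := ih hx' (fun h => he (List.mem_cons_of_mem g h))
      refine ⟨g :: y, admissible_cons.2 ⟨⟨fun hgy => ?_, fun b hb => ?_⟩, hy⟩, hxy.cons_cons g,
        fun b => by simp only [List.mem_cons, hmem]; tauto⟩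
      · rcases (hmem g).1 hgy with rfl | h
        exacts [he List.mem_cons_self, hgx h]
      · rcases (hmem b).1 hb with rfl | h
        exacts [heg, hg b h]

variable [DecidableEq S]

def IsLinearExtension (F : Finset S) (u : List S) : Prop := Admissible u ∧ u.toFinset = F

theorem IsLinearExtension.mem_iff {F : Finset S} {u : List S} (hu : IsLinearExtension F u)
    {b : S} : b ∈ u ↔ b ∈ F := by
  rw [← hu.2, mem_toFinset]

theorem Admissible.exists_linearExtension {F : Finset S} {x : List S} (hx : Admissible x)
    (hxF : x.toFinset ⊆ F) : ∃ u, IsLinearExtension F u ∧ x <+ u := by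
  suffices ∀ D : Finset S, ∀ x : List S, Admissible x → Disjoint D x.toFinset →
      ∃ u, Admissible u ∧ u.toFinset = x.toFinset ∪ D ∧ x <+ u by
    obtain ⟨u, hu, hcont, hxu⟩ := this (F \ x.toFinset) x hx Finset.sdiff_disjoint
    exact ⟨u, ⟨hu, hcont.trans (Finset.union_sdiff_of_subset hxF)⟩, hxu⟩
  intro D
  induction D using Finset.induction_on with
  | empty => exact fun x hx _ => ⟨x, hx, by simp, List.Sublist.refl x⟩
  | insert e D heD ih =>
    intro x hx hdisj
    obtain ⟨u, hu, hcont, hxu⟩ := ih x hx (Finset.disjoint_of_subset_left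
      (Finset.subset_insert e D) hdisj)
    have heu : e ∉ u := by
      rw [← List.mem_toFinset, hcont, Finset.mem_union, not_or]
      exact ⟨Finset.disjoint_left.1 hdisj (Finset.mem_insert_self e D), heD⟩
    obtain ⟨y, hy, huy, hmem⟩ := hu.exists_insert heu
    refine ⟨y, hy, ?_, hxu.trans huy⟩
    ext b
    simp only [List.mem_toFinset, hmem, ← List.mem_toFinset (l := u), hcont, Finset.mem_union,
      Finset.mem_insert]
    tauto

theorem isLinearExtension_cons {F : Finset S} {a : S} {w : List S} :
    IsLinearExtension F (a :: w) ↔ Minimal (· ∈ F) a ∧ IsLinearExtension (F.erase a) w := by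
  simp only [IsLinearExtension, admissible_cons, minimal_iff_forall_lt]
  constructor
  · rintro ⟨⟨⟨haw, hmin⟩, hw⟩, rfl⟩
    refine ⟨⟨by simp, fun b hba hb => ?_⟩, hw, ?_⟩
    · simp only [List.toFinset_cons, Finset.mem_insert, List.mem_toFinset] at hb
      rcases hb with rfl | hb
      exacts [lt_irrefl _ hba, hmin b hb hba]
    · rw [List.toFinset_cons, Finset.erase_insert (by simpa using haw)]
  · rintro ⟨⟨haF, hmin⟩, hw, hwF⟩
    have hmem : ∀ {b}, b ∈ w ↔ b ≠ a ∧ b ∈ F := by simp [← List.mem_toFinset (l := w), hwF]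
    refine ⟨⟨⟨fun h => (hmem.1 h).1 rfl, fun b hb hba => hmin hba (hmem.1 hb).2⟩, hw⟩, ?_⟩
    rw [List.toFinset_cons, hwF, Finset.insert_erase haF]

theorem exists_linearExtension_cons_iff {F : Finset S} {a : S} (ha : Minimal (· ∈ F) a)
    {x : List S} (hx : Admissible x) (hxF : x.toFinset ⊆ F) :
    (∃ w, IsLinearExtension (F.erase a) w ∧ x <+ a :: w) ↔ a ∉ x ∨ x.head? = some a := by
  constructor
  · rintro ⟨w, hw, hxw⟩
    have haw : a ∉ w := by simp [← List.mem_toFinset (l := w), hw.2]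
    rcases List.sublist_cons_iff.1 hxw with h | ⟨y, rfl, -⟩
    exacts [Or.inl fun hax => haw (h.subset hax), Or.inr rfl]
  · rintro (hax | hhead)
    · obtain ⟨w, hw, hxw⟩ := hx.exists_linearExtension (F := F.erase a)
        (fun b hb => Finset.mem_erase.2 ⟨by rintro rfl; simp_all, hxF hb⟩)
      exact ⟨w, hw, hxw.trans (List.sublist_cons_self a w)⟩
    · obtain ⟨y, rfl⟩ : ∃ y, x = a :: y := by
        cases x <;> simp_all
      obtain ⟨⟨hay, -⟩, hy⟩ := admissible_cons.1 hx
      obtain ⟨w, hw, hyw⟩ := hy.exists_linearExtension (F := F.erase a)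
        (fun b hb => Finset.mem_erase.2 ⟨by rintro rfl; simp_all, hxF (by simp_all)⟩)
      exact ⟨w, hw, hyw.cons_cons a⟩

end Words

section Restriction

open List

variable {S : Type*}

/-- How the complexes built so far, on `F.erase a` and on `F`, correspond under `branch a R M`. -/
def BranchInv (a : S) (R M : Finset S) (O O' : Set (List S)) : Prop :=
  ∀ y, (a :: y ∈ O' ↔ y ∈ O) ∧
    (a ∉ y → (y ∈ O' ↔ a ∈ R ∨ (∃ b ∈ M, y.head? = some b) ∨ y ∈ O))

theorem BranchInv.union_sublist {a : S} {R M : Finset S} {O O' : Set (List S)}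
    (h : BranchInv a R M O O') (w : List S) :
    BranchInv a R M (O ∪ {x | x <+ w}) (O' ∪ {x | x <+ a :: w}) := by
  intro y
  simp only [Set.mem_union, Set.mem_ofPred_eq, cons_sublist_cons, (h y).1, true_and]
  intro hay
  rw [(h y).2 hay, sublist_cons_iff_of_notMem hay]
  simp only [or_assoc]

variable [DecidableEq S]

/-- The cells not containing `R`, and (by `exists_linearExtension_cons_iff`) the cells of the
linear extensions that start with a letter of `M`. -/
def oldCells (R M : Finset S) : Set (List S) :=
  {x | ¬ R ⊆ x.toFinset ∨ ∃ b ∈ M, b ∉ x ∨ x.head? = some b}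

theorem oldCells_insert (R M : Finset S) (a : S) :
    oldCells R (insert a M) = oldCells R M ∪ {x | a ∉ x ∨ x.head? = some a} := by
  ext x
  simp only [oldCells, Set.mem_union, Set.mem_ofPred_eq, Finset.exists_mem_insert, or_assoc]
  constructor
  · rintro (h | h | h | h)
    exacts [Or.inl h, Or.inr (Or.inr (Or.inl h)), Or.inr (Or.inr (Or.inr h)), Or.inr (Or.inl h)]
  · rintro (h | h | h | h)
    exacts [Or.inl h, Or.inr (Or.inr (Or.inr h)), Or.inr (Or.inl h), Or.inr (Or.inr (Or.inl h))]

/-- Prefixing the letter `a` to a cell of a shelling of the words on `F.erase a`; the restriction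
gains `a` exactly when the cells without `a` are already old. -/
def branch (a : S) (R M : Finset S) (p : List S × List S) : List S × List S :=
  (a :: p.1, if a ∈ R ∨ ∃ b ∈ M, p.2.head? = some b then a :: p.2 else p.2)

theorem branch_snd_sublist (a : S) (R M : Finset S) {p : List S × List S} (h : p.2 <+ p.1) :
    (branch a R M p).2 <+ (branch a R M p).1 := by
  unfold branch
  split_ifs
  exacts [h.cons_cons a, h.trans (sublist_cons_self a p.1)]

theorem branchInv_oldCells {a : S} {R M : Finset S} (haM : a ∉ M) :
    BranchInv a R M (oldCells (R.erase a ∪ M) ∅) (oldCells R M) := by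
  intro y
  have hM : ∀ b ∈ M, b ≠ a := fun b hb hba => haM (hba ▸ hb)
  constructor
  · simp only [oldCells, Set.mem_ofPred_eq]
    rw [toFinset_cons, Finset.subset_insert_iff]
    simp only [Finset.union_subset_iff, Finset.notMem_empty, false_and, exists_false, or_false,
      mem_cons, head?_cons, Option.some.injEq, not_or, not_and_or, Finset.not_subset]
    constructor
    · rintro (h | ⟨b, hbM, ⟨-, hb⟩ | hb⟩)
      · exact Or.inl h
      · exact Or.inr ⟨b, hbM, by simpa using hb⟩
      · exact absurd hb.symm (hM b hbM)
    · rintro (h | ⟨b, hbM, hb⟩)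
      · exact Or.inl h
      · exact Or.inr ⟨b, hbM, Or.inl ⟨hM b hbM, by simpa using hb⟩⟩
  · intro hay
    have hay' : a ∉ y.toFinset := by simpa using hay
    simp only [oldCells, Set.mem_ofPred_eq, Finset.union_subset_iff, Finset.notMem_empty,
      false_and, exists_false, or_false, not_and_or, Finset.not_subset]
    constructor
    · rintro (⟨b, hbR, hby⟩ | ⟨b, hbM, hb | hb⟩)
      · by_cases hba : b = a
        · exact Or.inl (hba ▸ hbR)
        · exact Or.inr (Or.inr (Or.inl ⟨b, Finset.mem_erase.2 ⟨hba, hbR⟩, hby⟩))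
      · exact Or.inr (Or.inr (Or.inr ⟨b, hbM, by simpa using hb⟩))
      · exact Or.inr (Or.inl ⟨b, hbM, hb⟩)
    · rintro (haR | ⟨b, hbM, hb⟩ | ⟨b, hbR, hby⟩ | ⟨b, hbM, hby⟩)
      · exact Or.inl ⟨a, haR, hay'⟩
      · exact Or.inr ⟨b, hbM, Or.inr hb⟩
      · exact Or.inl ⟨b, Finset.mem_of_mem_erase hbR, hby⟩
      · exact Or.inr ⟨b, hbM, Or.inl (by simpa using hby)⟩

theorem BranchInv.interval {a : S} {R M : Finset S} {O O' : Set (List S)}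
    (hInv : BranchInv a R M O O') {p : List S × List S} (haw : a ∉ p.1) (hrw : p.2 <+ p.1)
    (hint : ∀ x, x <+ p.1 → (x ∈ O ↔ ¬ p.2 <+ x))
    (hhead : ∀ c ∈ intervalHeads p.1 p.2, c ∈ M → intervalHeads p.1 p.2 = {c})
    (hMr : M ⊆ p.2.toFinset) :
    ∀ x, x <+ (branch a R M p).1 → (x ∈ O' ↔ ¬ (branch a R M p).2 <+ x) := by
  have har : a ∉ p.2 := fun h => haw (hrw.subset h)
  have same_head : ∀ {x y : List S} {b c : S}, p.2 <+ x → x <+ p.1 → p.2 <+ y → y <+ p.1 →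
      x.head? = some b → y.head? = some c → b ∈ M → c = b := by
    intro x y b c hrx hxw hry hyw hb hc hbM
    have hc' : c ∈ intervalHeads p.1 p.2 := ⟨y, hyw, hry, hc⟩
    rwa [hhead b ⟨x, hxw, hrx, hb⟩ hbM] at hc'
  intro x hx
  rcases sublist_cons_iff.1 hx with hxw | ⟨y, rfl, hyw⟩
  · have hax : a ∉ x := fun h => haw (hxw.subset h)
    rw [(hInv x).2 hax, hint x hxw]
    unfold branch
    split_ifs with hcond
    · refine iff_of_true ?_ fun h => hax (h.subset mem_cons_self)
      rcases hcond with haR | ⟨b, hbM, hb⟩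
      · exact Or.inl haR
      by_cases hrx : p.2 <+ x
      · obtain ⟨c, hc⟩ : ∃ c, x.head? = some c := by
          cases x <;> simp_all
        exact Or.inr (Or.inl ⟨b, hbM, hc.trans (congrArg some
          (same_head (Sublist.refl _) hrw hrx hxw hb hc hbM))⟩)
      · exact Or.inr (Or.inr hrx)
    · push Not at hcond
      refine ⟨?_, fun h => Or.inr (Or.inr h)⟩
      rintro (haR | ⟨c, hcM, hc⟩ | h) hrx
      · exact hcond.1 haR
      · obtain ⟨d, r, hr⟩ := exists_cons_of_ne_nil (ne_nil_of_mem (mem_toFinset.1 (hMr hcM)))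
        have hd : p.2.head? = some d := by simp [hr]
        exact hcond.2 c hcM (hd.trans (congrArg some
          (same_head hrx hxw (Sublist.refl _) hrw hc hd hcM)))
      · exact h hrx
  · rw [(hInv y).1, hint y hyw]
    unfold branch
    split_ifs
    · rw [cons_sublist_cons]
    · rw [sublist_cons_iff_of_notMem har]

variable [PartialOrder S]

theorem Minimal.erase {F : Finset S} {a c : S} (hc : Minimal (· ∈ F) c) (hca : c ≠ a) :
    Minimal (· ∈ F.erase a) c :=
  hc.mono (fun _ => Finset.mem_of_mem_erase) (Finset.mem_erase.2 ⟨hca, hc.1⟩)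

/-- The invariant carried by the recursion. One level down, the minimal letters `M` handled
earlier are part of `R`, so it puts the heads of the new cells `[r, w]` all in `M` or all outside
`M`. -/
def HeadCondition (F R : Finset S) (w r : List S) : Prop :=
  ∀ c ∈ intervalHeads w r, c ∈ R → Minimal (· ∈ F) c → intervalHeads w r = {c}

theorem headCondition_branch {F R M : Finset S} {a : S}
    (hRmin : a ∉ R → ∀ c ∈ R, Minimal (· ∈ F) c → c ∈ M) {p : List S × List S}
    (haw : a ∉ p.1) (hrw : p.2 <+ p.1) (hMr : M ⊆ p.2.toFinset)
    (h : HeadCondition (F.erase a) (R.erase a ∪ M) p.1 p.2) :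
    HeadCondition F R (branch a R M p).1 (branch a R M p).2 := by
  unfold branch
  split_ifs with hcond <;> dsimp only
  · rw [HeadCondition, intervalHeads_cons_cons haw hrw]
    rintro c rfl - -
    rfl
  push Not at hcond
  rw [HeadCondition, intervalHeads_cons (fun h => haw (hrw.subset h)) hrw]
  rintro c (rfl | hc) hcR hcmin
  · exact absurd hcR hcond.1
  have hca : c ≠ a := by
    rintro rfl
    exact haw (mem_of_mem_intervalHeads hc)
  have hcM := hRmin hcond.1 c hcR hcmin
  have hheads := h c hc (Finset.mem_union_left _ (Finset.mem_erase.2 ⟨hca, hcR⟩))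
    (hcmin.erase hca)
  obtain ⟨d, r, hr⟩ := exists_cons_of_ne_nil (ne_nil_of_mem (mem_toFinset.1 (hMr hcM)))
  have hd : d ∈ intervalHeads p.1 p.2 := ⟨p.2, hrw, Sublist.refl _, by simp [hr]⟩
  rw [hheads, Set.mem_singleton_iff] at hd
  exact absurd (by simp [hr, hd]) (hcond.2 c hcM)

end Restriction

section RelShelling

open List

variable {S : Type*} [PartialOrder S] [DecidableEq S]

structure IsRelShelling (F R M : Finset S) (L : List (List S × List S)) : Prop where
  isLinearExtension : ∀ p ∈ L, IsLinearExtension F p.1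
  complete : ∀ u, IsLinearExtension F u → (∀ b ∈ M, u.head? ≠ some b) → ∃ p ∈ L, p.1 = u
  shelling : IsShellingFrom List.Sublist (oldCells R M) L
  headCondition : ∀ p ∈ L, HeadCondition F R p.1 p.2

theorem IsRelShelling.subset_toFinset_snd {F R M : Finset S} {L : List (List S × List S)}
    (hL : IsRelShelling F R M L) {p : List S × List S} (hp : p ∈ L) : R ⊆ p.2.toFinset := by
  have := hL.shelling.snd_notMem Sublist.refl hp
  simp only [oldCells, Set.mem_ofPred_eq, not_or] at this
  exact not_not.1 this.1

theorem IsRelShelling.isShellingFrom_map_branch {F R M : Finset S} {a : S} (haM : a ∉ M)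
    (hM : ∀ b ∈ M, Minimal (· ∈ F) b) {Ls : List (List S × List S)}
    (hLs : IsRelShelling (F.erase a) (R.erase a ∪ M) ∅ Ls) :
    IsShellingFrom List.Sublist (oldCells R M) (Ls.map (branch a R M)) := by
  refine hLs.shelling.map (BranchInv a R M) _ (fun p hp O O' hInv hrw hint => ?_)
    (branchInv_oldCells haM)
  have haw : a ∉ p.1 := by simp [(hLs.isLinearExtension p hp).mem_iff]
  have hhead : ∀ c ∈ intervalHeads p.1 p.2, c ∈ M → intervalHeads p.1 p.2 = {c} :=
    fun c hc hcM => hLs.headCondition p hp c hc (Finset.mem_union_right _ hcM)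
      ((hM c hcM).erase fun hca => haM (hca ▸ hcM))
  have hMr : M ⊆ p.2.toFinset :=
    Finset.union_subset_right (hLs.subset_toFinset_snd hp)
  exact ⟨branch_snd_sublist a R M hrw, hInv.interval haw hrw hint hhead hMr,
    hInv.union_sublist p.1⟩

theorem IsRelShelling.map_branch_append {F R M : Finset S} {a : S} (ha : Minimal (· ∈ F) a)
    (haM : a ∉ M) (hM : ∀ b ∈ M, Minimal (· ∈ F) b)
    (hRmin : a ∉ R → ∀ c ∈ R, Minimal (· ∈ F) c → c ∈ M) {Ls Lr : List (List S × List S)}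
    (hLs : IsRelShelling (F.erase a) (R.erase a ∪ M) ∅ Ls)
    (hLr : IsRelShelling F R (insert a M) Lr) :
    IsRelShelling F R M (Ls.map (branch a R M) ++ Lr) where
  isLinearExtension p hp := by
    rcases mem_append.1 hp with hp | hp
    · obtain ⟨q, hq, rfl⟩ := mem_map.1 hp
      exact isLinearExtension_cons.2 ⟨ha, hLs.isLinearExtension q hq⟩
    · exact hLr.isLinearExtension p hp
  complete u hu huM := by
    by_cases hua : u.head? = some a
    · obtain ⟨w, rfl⟩ : ∃ w, u = a :: w := by
        cases u <;> simp_all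
      obtain ⟨q, hq, rfl⟩ := hLs.complete w (isLinearExtension_cons.1 hu).2 (by simp)
      exact ⟨branch a R M q, mem_append_left _ (mem_map_of_mem hq), rfl⟩
    · obtain ⟨p, hp, rfl⟩ := hLr.complete u hu
        ((Finset.forall_mem_insert _ _ _).2 ⟨hua, huM⟩)
      exact ⟨p, mem_append_right _ hp, rfl⟩
  shelling := by
    refine (hLs.isShellingFrom_map_branch haM hM).append
      (hLr.shelling.congr fun p hp x hxp => ?_)
    have hpF := hLr.isLinearExtension p hp
    have hx : Admissible x := hpF.1.sublist hxp
    have hxF : x.toFinset ⊆ F := hpF.2 ▸ hxp.toFinset_subset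
    have hcells : (∃ q ∈ Ls.map (branch a R M), x <+ q.1) ↔
        ∃ w, IsLinearExtension (F.erase a) w ∧ x <+ a :: w := by
      constructor
      · rintro ⟨_, hq', hxq⟩
        obtain ⟨q, hq, rfl⟩ := mem_map.1 hq'
        exact ⟨q.1, hLs.isLinearExtension q hq, hxq⟩
      · rintro ⟨w, hw, hxw⟩
        obtain ⟨q, hq, rfl⟩ := hLs.complete w hw (by simp)
        exact ⟨branch a R M q, mem_map_of_mem hq, hxw⟩
    rw [oldCells_insert, Set.mem_union, Set.mem_union, Set.mem_ofPred_eq, Set.mem_ofPred_eq,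
      hcells, exists_linearExtension_cons_iff ha hx hxF]
  headCondition p hp := by
    rcases mem_append.1 hp with hp | hp
    · obtain ⟨q, hq, rfl⟩ := mem_map.1 hp
      exact headCondition_branch hRmin (by simp [(hLs.isLinearExtension q hq).mem_iff])
        (hLs.shelling.snd_le hq) (Finset.union_subset_right (hLs.subset_toFinset_snd hq))
        (hLs.headCondition q hq)
    · exact hLr.headCondition p hp

theorem isRelShelling_empty : IsRelShelling (∅ : Finset S) ∅ ∅ [([], [])] where
  isLinearExtension p hp := by
    obtain rfl := mem_singleton.1 hp
    exact ⟨⟨nodup_nil, Pairwise.nil⟩, rfl⟩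
  complete u hu _ := ⟨([], []), mem_singleton_self _, (toFinset_eq_empty_iff u).1 hu.2 ▸ rfl⟩
  shelling := ⟨Sublist.refl _, fun x hx => by simp [sublist_nil.1 hx, oldCells], trivial⟩
  headCondition p hp := by
    obtain rfl := mem_singleton.1 hp
    rintro c ⟨x, hx, -, hc⟩
    simp [sublist_nil.1 hx] at hc

theorem isRelShelling_nil {F R M : Finset S} (hF : F.Nonempty)
    (hall : ∀ a, Minimal (· ∈ F) a → a ∈ M) : IsRelShelling F R M [] where
  isLinearExtension := by simp
  complete u hu huM := by
    obtain ⟨a, w, rfl⟩ : ∃ a w, u = a :: w := by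
      cases u with
      | nil => simp [← hu.2] at hF
      | cons a w => exact ⟨a, w, rfl⟩
    exact absurd rfl (huM a (hall a (isLinearExtension_cons.1 hu).1))
  shelling := trivial
  headCondition := by simp

/-- The minimal letters `a` of `F` are handled one at a time, those in `R` first (this is what
`hRM` keeps track of); the words starting with `a` come from a shelling of `F.erase a`. -/
theorem exists_isRelShelling (F R M : Finset S) (hRF : R ⊆ F)
    (hM : ∀ b ∈ M, Minimal (· ∈ F) b) (hRM : (∀ c ∈ R, Minimal (· ∈ F) c → c ∈ M) ∨ M ⊆ R) :
    ∃ L, IsRelShelling F R M L := by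
  rcases F.eq_empty_or_nonempty with rfl | hF
  · obtain rfl : R = ∅ := Finset.subset_empty.1 hRF
    obtain rfl : M = ∅ := Finset.eq_empty_of_forall_notMem fun b hb => by simpa using (hM b hb).1
    exact ⟨_, isRelShelling_empty⟩
  by_cases hall : ∀ a, Minimal (· ∈ F) a → a ∈ M
  · exact ⟨[], isRelShelling_nil hF hall⟩
  obtain ⟨a, ha, haM, hRmin⟩ : ∃ a, Minimal (· ∈ F) a ∧ a ∉ M ∧
      (a ∉ R → ∀ c ∈ R, Minimal (· ∈ F) c → c ∈ M) := by
    by_cases h : ∃ c ∈ R, Minimal (· ∈ F) c ∧ c ∉ M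
    · obtain ⟨c, hcR, hc, hcM⟩ := h
      exact ⟨c, hc, hcM, fun h => absurd hcR h⟩
    · push Not at hall h
      obtain ⟨a, ha, haM⟩ := hall
      exact ⟨a, ha, haM, fun _ => h⟩
  have hMF : M ⊆ F := fun b hb => (hM b hb).1
  obtain ⟨Ls, hLs⟩ := exists_isRelShelling (F.erase a) (R.erase a ∪ M) ∅
    (Finset.union_subset (Finset.erase_subset_erase a hRF)
      fun b hb => Finset.mem_erase.2 ⟨fun h => haM (h ▸ hb), hMF hb⟩)
    (by simp) (Or.inr (Finset.empty_subset _))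
  obtain ⟨Lr, hLr⟩ := exists_isRelShelling F R (insert a M) hRF
    ((Finset.forall_mem_insert _ _ _).2 ⟨ha, hM⟩) (by
      by_cases haR : a ∈ R
      · exact hRM.imp (fun h c hc hcmin => Finset.mem_insert_of_mem (h c hc hcmin))
          (Finset.insert_subset haR)
      · exact Or.inl fun c hc hcmin => Finset.mem_insert_of_mem (hRmin haR c hc hcmin))
  exact ⟨_, hLs.map_branch_append ha haM hM hRmin hLr⟩
termination_by (F.card, F.card - M.card)
decreasing_by
  · exact Prod.Lex.left _ _ (Finset.card_erase_lt_of_mem ha.1)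
  · have := Finset.card_le_card (Finset.insert_subset ha.1 hMF)
    rw [Finset.card_insert_of_notMem haM] at this ⊢
    exact Prod.Lex.right _ (by omega)

end RelShelling

section WordComplex

open List

variable {S : Type*}

theorem IWord.le_iff_sublist {v w : IWord S} : v ≤ w ↔ v.toList <+ w.toList := Iff.rfl

variable [PartialOrder S] [DecidableEq S]

/-- The complex `Γ(Δ, P)`. -/
def wordComplex (Δ : Set (Finset S)) : Set (IWord S) :=
  {w | Admissible w.toList ∧ w.toList.toFinset ∈ Δ}

theorem IsLowerSet.wordComplex {Δ : Set (Finset S)} (h : IsLowerSet Δ) :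
    IsLowerSet (wordComplex Δ) := fun _ _ hvw hw =>
  ⟨hw.1.sublist hvw, h (IWord.le_iff_sublist.1 hvw).toFinset_subset hw.2⟩

theorem maximal_toFinset_of_maximal_wordComplex {Δ : Set (Finset S)} (hfin : Δ.Finite)
    {m : IWord S} (hm : Maximal (· ∈ wordComplex Δ) m) : Maximal (· ∈ Δ) m.toList.toFinset := by
  obtain ⟨G, hmG, hG⟩ := hfin.exists_le_maximal hm.1.2
  obtain ⟨u, hu, hmu⟩ := hm.1.1.exists_linearExtension hmG
  have hmu : m = u := hm.eq_of_le (y := show IWord S from u) ⟨hu.1, hu.2 ▸ hG.1⟩ hmu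
  rw [hmu]
  exact hu.2 ▸ hG

theorem shellable_union_wordComplex_Iic {Γ₀ : Set (IWord S)} {F R : Finset S} (hRF : R ⊆ F)
    (hΓ₀ : Γ₀.Nonempty → Shellable (fun w : IWord S => w.toList.length) Γ₀)
    (hlow : IsLowerSet Γ₀) (hrk : ∀ m, Maximal (· ∈ Γ₀) m → m.toList.length = F.card)
    (hR : ∀ x ∈ wordComplex (Set.Iic F), x ∈ Γ₀ ↔ ¬ R ⊆ x.toList.toFinset) :
    Shellable (fun w : IWord S => w.toList.length) (Γ₀ ∪ wordComplex (Set.Iic F)) := by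
  obtain ⟨L, hL⟩ := exists_isRelShelling F R ∅ hRF (by simp) (Or.inr (Finset.empty_subset _))
  have hcell : ∀ p ∈ L, ∀ x : IWord S, x.toList <+ p.1 → x ∈ wordComplex (Set.Iic F) :=
    fun p hp x hx => ⟨(hL.isLinearExtension p hp).1.sublist hx,
      (hL.isLinearExtension p hp).2 ▸ hx.toFinset_subset⟩
  have hcells : {x : IWord S | ∃ p ∈ L, x.toList <+ p.1} = wordComplex (Set.Iic F) := by
    refine Set.Subset.antisymm (fun x ⟨p, hp, hx⟩ => hcell p hp x hx) fun x hx => ?_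
    obtain ⟨u, hu, hxu⟩ := hx.1.exists_linearExtension hx.2
    obtain ⟨p, hp, rfl⟩ := hL.complete u hu (by simp)
    exact ⟨p, hp, hxu⟩
  obtain ⟨u, hu, -⟩ := (show Admissible ([] : List S) from ⟨nodup_nil, Pairwise.nil⟩)
    |>.exists_linearExtension (Finset.empty_subset F)
  obtain ⟨p₀, hp₀, -⟩ := hL.complete u hu (by simp)
  rw [← hcells]
  refine Shellable.union_of_isShellingFrom (L := show List (IWord S × IWord S) from L) hΓ₀ hlow hrk (fun p hp => ?_)
    (hL.shelling.congr fun p hp x hx => ?_) (Or.inr (ne_nil_of_mem hp₀))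
  · exact (toFinset_card_of_nodup (hL.isLinearExtension p hp).1.1).symm.trans
      (congrArg Finset.card (hL.isLinearExtension p hp).2)
  · simp only [oldCells, Finset.notMem_empty, false_and, exists_false, or_false,
      Set.mem_ofPred_eq]
    exact (hR x (hcell p hp x hx)).symm

theorem shellable_wordComplex_Iic (t : Finset S) :
    Shellable (fun w : IWord S => w.toList.length) (wordComplex (Set.Iic t)) := by
  simpa using shellable_union_wordComplex_Iic (Γ₀ := ∅) (Finset.empty_subset t) (by simp)
    isLowerSet_empty (by simp [Maximal]) (by simp)

theorem Shellable.wordComplex {Δ : Set (Finset S)} (hshell : Shellable Finset.card Δ)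
    (hfin : Δ.Finite) (hlow : IsLowerSet Δ) :
    Shellable (fun w : IWord S => w.toList.length) (wordComplex Δ) := by
  induction hshell with
  | simplex t => exact shellable_wordComplex_Iic t
  | step Δ s t hs hst hmax huniq hpure hrec ih =>
    have hlow' : IsLowerSet {x ∈ Δ | ¬ s ≤ x} := hlow.inter (isUpperSet_Ici s).compl
    rcases eq_Iic_or_maximal_of_maximal_deletion hfin hlow Finset.card_strictMono hmax huniq
      hpure hrec.pure with rfl | hmax'
    · exact shellable_wordComplex_Iic t
    have hsplit : _root_.wordComplex Δ =
        _root_.wordComplex {x ∈ Δ | ¬ s ≤ x} ∪ _root_.wordComplex (Set.Iic t) := by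
      ext w
      constructor
      · rintro ⟨hw, hwΔ⟩
        by_cases hsw : s ≤ w.toList.toFinset
        · exact Or.inr ⟨hw, le_of_unique_maximal_above hfin huniq hwΔ hsw⟩
        · exact Or.inl ⟨hw, hwΔ, hsw⟩
      · rintro (⟨hw, hwΔ, -⟩ | ⟨hw, hwt⟩)
        exacts [⟨hw, hwΔ⟩, ⟨hw, hlow hwt hmax.1⟩]
    rw [hsplit]
    refine shellable_union_wordComplex_Iic hst (fun _ => ih (hfin.subset fun _ h => h.1) hlow')
      hlow'.wordComplex (fun m hm => ?_) fun x hx => ?_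
    · rw [← toFinset_card_of_nodup hm.1.1.1, hpure _ t
        (hmax' _ (maximal_toFinset_of_maximal_wordComplex (hfin.subset fun _ h => h.1) hm)) hmax]
    · exact ⟨fun h => h.2.2, fun h => ⟨hx.1, hlow hx.2 hmax.1, h⟩⟩

end WordComplex

/-- If `Δ` is a finite shellable simplicial complex on `S` and `P` is a
partial order on `S`, then the Boolean cell complex `Γ(Δ,P)` of injective
words with content in `Δ` that are linear extensions of `P` restricted to
their content is shellable. -/
theorem gammaP_shellable {S : Type*} [DecidableEq S] [PartialOrder S]
    (Δ : Set (Finset S)) (hfin : Δ.Finite)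
    (hdown : ∀ σ ∈ Δ, ∀ τ ⊆ σ, τ ∈ Δ)
    (hshell : Shellable Finset.card Δ) :
    Shellable (fun w : IWord S => w.toList.length)
      {w : IWord S | w.toList.Nodup ∧ w.toList.toFinset ∈ Δ ∧
        w.toList.Pairwise fun a b => ¬ b < a} := by
  have hset : {w : IWord S | w.toList.Nodup ∧ w.toList.toFinset ∈ Δ ∧
      w.toList.Pairwise fun a b => ¬ b < a} = wordComplex Δ := by
    ext w
    simp only [wordComplex, Admissible, Set.mem_ofPred_eq]
    tauto
  rw [hset]
  exact hshell.wordComplex hfin fun _ _ hba ha => hdown _ ha _ hba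
end

section
/- Let Δ be a finite simplicial complex on vertex set S. Then the Boolean cell complex Γ(Δ) of all injective words over S with content in Δ is partitionable: it admits a partition into pairwise disjoint intervals [σ_i, τ_i] in the subword order such that each τ_i is a maximal cell of Γ(Δ). -/
/-!
Order the facets of `Δ` by a well-order and file every face under the first facet containing
it. The faces filed under a facet `F` form an up-set `U` of the Boolean lattice `2^F`, so it
suffices to partition the injective words with content in an up-set `U ⊆ 2^M` into subword
intervals whose tops are orderings of `M`. This goes by induction on `M`. If `∅ ∉ U`, every
word is `x :: v`, and the words starting with `x` are `x` prepended to the words with content in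
the up-set `{A ⊆ M \ {x} | insert x A ∈ U}`. If `∅ ∈ U` then `U = 2^M`; for a fixed `y ∈ M`,
the intervals `[σ, τ]` partitioning the words over `M \ {y}` become `[σ, y :: τ]`, which cover
the words avoiding `y` and those starting with `y`, and the remaining words `x :: v` with
`x ≠ y` and `y ∈ v` are handled as in the first case.
-/

open scoped List
open Function

namespace InjectiveWords

variable {S : Type*}

def subwordInterval (σ τ : List S) : Set (List S) := {w | σ <+ w ∧ w <+ τ}

theorem subwordInterval_cons_cons {x : S} {σ τ : List S} (hx : x ∉ τ) :
    subwordInterval (x :: σ) (x :: τ) = (x :: ·) '' subwordInterval σ τ := by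
  ext w
  simp only [subwordInterval, Set.mem_ofPred_eq, Set.mem_image]
  constructor
  · rintro ⟨hσw, hwτ⟩
    rcases List.sublist_cons_iff.1 hwτ with hwτ | ⟨v, rfl, hvτ⟩
    · exact absurd (hwτ.subset (hσw.subset List.mem_cons_self)) hx
    · exact ⟨v, ⟨List.cons_sublist_cons.1 hσw, hvτ⟩, rfl⟩
  · rintro ⟨v, ⟨hσv, hvτ⟩, rfl⟩
    exact ⟨hσv.cons_cons x, hvτ.cons_cons x⟩

theorem subwordInterval_cons_right {y : S} {σ τ : List S} (hy : y ∉ σ) :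
    subwordInterval σ (y :: τ) =
      subwordInterval σ τ ∪ (y :: ·) '' subwordInterval σ τ := by
  ext w
  simp only [subwordInterval, Set.mem_union, Set.mem_ofPred_eq, Set.mem_image]
  constructor
  · rintro ⟨hσw, hwτ⟩
    rcases List.sublist_cons_iff.1 hwτ with hwτ | ⟨v, rfl, hvτ⟩
    · exact Or.inl ⟨hσw, hwτ⟩
    · refine Or.inr ⟨v, ⟨(List.sublist_cons_iff.1 hσw).resolve_right ?_, hvτ⟩, rfl⟩
      rintro ⟨_, rfl, -⟩
      exact hy List.mem_cons_self
  · rintro (⟨hσw, hwτ⟩ | ⟨v, ⟨hσv, hvτ⟩, rfl⟩)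
    · exact ⟨hσw, hwτ.cons y⟩
    · exact ⟨hσv.cons y, hvτ.cons_cons y⟩

structure IsIntervalPartition (T W : Set (List S)) (P : Set (List S × List S)) : Prop where
  top_mem : ∀ p ∈ P, p.2 ∈ T
  sublist : ∀ p ∈ P, p.1 <+ p.2
  subwordInterval_subset : ∀ p ∈ P, subwordInterval p.1 p.2 ⊆ W
  existsUnique : ∀ w ∈ W, ∃! p, p ∈ P ∧ w ∈ subwordInterval p.1 p.2

def Partitionable (T W : Set (List S)) : Prop := ∃ P, IsIntervalPartition T W P

namespace Partitionable

variable {T W : Set (List S)}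

theorem mono {T' : Set (List S)} (h : Partitionable T W) (hT : T ⊆ T') : Partitionable T' W :=
  let ⟨P, hP⟩ := h
  ⟨P, ⟨fun p hp => hT (hP.top_mem p hp), hP.sublist, hP.subwordInterval_subset,
    hP.existsUnique⟩⟩

theorem iUnion {ι : Type*} {W : ι → Set (List S)} (hW : Pairwise (Disjoint on W))
    (h : ∀ i, Partitionable T (W i)) : Partitionable T (⋃ i, W i) := by
  choose P hP using h
  refine ⟨⋃ i, P i, ⟨fun p hp => ?_, fun p hp => ?_, fun p hp => ?_, fun w hw => ?_⟩⟩
  · obtain ⟨i, hp⟩ := Set.mem_iUnion.1 hp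
    exact (hP i).top_mem p hp
  · obtain ⟨i, hp⟩ := Set.mem_iUnion.1 hp
    exact (hP i).sublist p hp
  · obtain ⟨i, hp⟩ := Set.mem_iUnion.1 hp
    exact ((hP i).subwordInterval_subset p hp).trans (Set.subset_iUnion W i)
  · obtain ⟨i, hwi⟩ := Set.mem_iUnion.1 hw
    obtain ⟨p, ⟨hp, hwp⟩, huniq⟩ := (hP i).existsUnique w hwi
    refine ⟨p, ⟨Set.mem_iUnion.2 ⟨i, hp⟩, hwp⟩, ?_⟩
    rintro q ⟨hq, hwq⟩
    obtain ⟨j, hq⟩ := Set.mem_iUnion.1 hq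
    obtain rfl : i = j := hW.eq (Set.not_disjoint_iff.2
      ⟨w, hwi, (hP j).subwordInterval_subset q hq hwq⟩)
    exact huniq q ⟨hq, hwq⟩

theorem union {W' : Set (List S)} (hW : Disjoint W W') (h : Partitionable T W)
    (h' : Partitionable T W') : Partitionable T (W ∪ W') := by
  rw [Set.union_eq_iUnion]
  exact iUnion (pairwise_disjoint_on_bool.2 hW) (Bool.rec h' h)

end Partitionable

theorem pairwise_disjoint_image_cons {ι : Type*} {f : ι → S} (hf : Injective f)
    (W : ι → Set (List S)) : Pairwise (Disjoint on fun i => (f i :: ·) '' W i) := by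
  intro i j hij
  refine Set.disjoint_left.2 ?_
  rintro _ ⟨u, -, rfl⟩ ⟨v, -, huv⟩
  exact hij (hf (List.cons_eq_cons.1 huv).1.symm)

def avoidingEarlierFacets (r : Finset S → Finset S → Prop) (Δ : Set (Finset S))
    (F : Finset S) : Set (Finset S) :=
  {G | ∀ F', Maximal (· ∈ Δ) F' → r F' F → ¬ G ⊆ F'}

theorem isUpperSet_avoidingEarlierFacets (r : Finset S → Finset S → Prop) (Δ : Set (Finset S))
    (F : Finset S) : IsUpperSet (avoidingEarlierFacets r Δ F) :=
  fun _ _ hGG' hG F' hF' hr hG'F' => hG F' hF' hr (hGG'.trans hG'F')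

variable [DecidableEq S]

def orderings (M : Finset S) : Set (List S) := {τ | τ.Nodup ∧ τ.toFinset = M}

theorem notMem_of_mem_orderings_erase {x : S} {M : Finset S} {τ : List S}
    (hτ : τ ∈ orderings (M.erase x)) : x ∉ τ := fun hx => by
  simpa [hτ.2] using List.mem_toFinset.2 hx

theorem cons_mem_orderings {x : S} {M : Finset S} {τ : List S} (hx : x ∈ M)
    (hτ : τ ∈ orderings (M.erase x)) : x :: τ ∈ orderings M :=
  ⟨List.nodup_cons.2 ⟨notMem_of_mem_orderings_erase hτ, hτ.1⟩,
    by rw [List.toFinset_cons, hτ.2, Finset.insert_erase hx]⟩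

namespace Partitionable

variable {W : Set (List S)} {M : Finset S}

theorem image_cons {x : S} (h : Partitionable (orderings (M.erase x)) W) (hx : x ∈ M) :
    Partitionable (orderings M) ((x :: ·) '' W) := by
  obtain ⟨P, hP⟩ := h
  have hxP : ∀ p ∈ P, x ∉ p.2 := fun p hp => notMem_of_mem_orderings_erase (hP.top_mem p hp)
  refine ⟨(fun p => (x :: p.1, x :: p.2)) '' P, ⟨?_, ?_, ?_, ?_⟩⟩
  · rintro _ ⟨p, hp, rfl⟩
    exact cons_mem_orderings hx (hP.top_mem p hp)
  · rintro _ ⟨p, hp, rfl⟩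
    exact (hP.sublist p hp).cons_cons x
  · rintro _ ⟨p, hp, rfl⟩
    rw [subwordInterval_cons_cons (hxP p hp)]
    exact Set.image_mono (hP.subwordInterval_subset p hp)
  · rintro _ ⟨w, hw, rfl⟩
    obtain ⟨p, ⟨hp, hwp⟩, huniq⟩ := hP.existsUnique w hw
    refine ⟨_, ⟨⟨p, hp, rfl⟩, ?_⟩, ?_⟩
    · rw [subwordInterval_cons_cons (hxP p hp)]
      exact Set.mem_image_of_mem _ hwp
    · rintro _ ⟨⟨q, hq, rfl⟩, hwq⟩
      rw [subwordInterval_cons_cons (hxP q hq), List.cons_injective.mem_set_image] at hwq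
      rw [huniq q ⟨hq, hwq⟩]

theorem union_image_cons {y : S} (h : Partitionable (orderings (M.erase y)) W) (hy : y ∈ M) :
    Partitionable (orderings M) (W ∪ (y :: ·) '' W) := by
  obtain ⟨P, hP⟩ := h
  have hyP : ∀ p ∈ P, y ∉ p.2 := fun p hp => notMem_of_mem_orderings_erase (hP.top_mem p hp)
  have hyP' : ∀ p ∈ P, y ∉ p.1 := fun p hp hyp => hyP p hp ((hP.sublist p hp).subset hyp)
  have hinterval : ∀ p ∈ P, subwordInterval p.1 (y :: p.2) =
      subwordInterval p.1 p.2 ∪ (y :: ·) '' subwordInterval p.1 p.2 :=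
    fun p hp => subwordInterval_cons_right (hyP' p hp)
  have hfree : ∀ w ∈ W ∪ (y :: ·) '' W, ∃ v ∈ W, ∀ p ∈ P,
      w ∈ subwordInterval p.1 (y :: p.2) ↔ v ∈ subwordInterval p.1 p.2 := by
    have hyW : ∀ w ∈ W, y ∉ w := fun w hw hyw => by
      obtain ⟨p, ⟨hp, hwp⟩, -⟩ := hP.existsUnique w hw
      exact hyP p hp (hwp.2.subset hyw)
    rintro w (hw | ⟨v, hv, rfl⟩)
    · refine ⟨w, hw, fun p hp => ?_⟩
      rw [hinterval p hp, Set.mem_union, or_iff_left]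
      rintro ⟨u, -, rfl⟩
      exact hyW _ hw List.mem_cons_self
    · refine ⟨v, hv, fun p hp => ?_⟩
      rw [hinterval p hp, Set.mem_union, List.cons_injective.mem_set_image, or_iff_right]
      exact fun hyv => hyP p hp (hyv.2.subset List.mem_cons_self)
  refine ⟨(fun p => (p.1, y :: p.2)) '' P, ⟨?_, ?_, ?_, ?_⟩⟩
  · rintro _ ⟨p, hp, rfl⟩
    exact cons_mem_orderings hy (hP.top_mem p hp)
  · rintro _ ⟨p, hp, rfl⟩
    exact (hP.sublist p hp).cons y
  · rintro _ ⟨p, hp, rfl⟩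
    rw [hinterval p hp]
    exact Set.union_subset_union (hP.subwordInterval_subset p hp)
      (Set.image_mono (hP.subwordInterval_subset p hp))
  · intro w hw
    obtain ⟨v, hv, hvw⟩ := hfree w hw
    obtain ⟨p, ⟨hp, hvp⟩, huniq⟩ := hP.existsUnique v hv
    refine ⟨_, ⟨⟨p, hp, rfl⟩, (hvw p hp).2 hvp⟩, ?_⟩
    rintro _ ⟨⟨q, hq, rfl⟩, hwq⟩
    rw [huniq q ⟨hq, (hvw q hq).1 hwq⟩]

end Partitionable

/-- For a simplicial complex `Δ`, `injWords Δ` is the paper's `Γ(Δ)`. -/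
def injWords (U : Set (Finset S)) : Set (List S) := {w | w.Nodup ∧ w.toFinset ∈ U}

theorem cons_mem_injWords_inter_Iic {x : S} {v : List S} {U : Set (Finset S)} {M : Finset S} :
    x :: v ∈ injWords (U ∩ Set.Iic M) ↔
      x ∈ M ∧ v ∈ injWords (insert x ⁻¹' U ∩ Set.Iic (M.erase x)) := by
  simp only [injWords, Set.mem_ofPred_eq, Set.mem_inter_iff, Set.mem_preimage, Set.mem_Iic,
    List.nodup_cons, List.toFinset_cons, Finset.insert_subset_iff,
    Finset.subset_erase, List.mem_toFinset]
  tauto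

theorem injWords_eq_iUnion_cons {U : Set (Finset S)} (hU : ∅ ∉ U) (M : Finset S) :
    injWords (U ∩ Set.Iic M) =
      ⋃ x : M, (x.1 :: ·) '' injWords (insert x.1 ⁻¹' U ∩ Set.Iic (M.erase x)) := by
  ext w
  simp only [Set.mem_iUnion, Set.mem_image]
  constructor
  · intro hw
    cases w with
    | nil => exact absurd hw.2.1 hU
    | cons x v =>
      obtain ⟨hx, hv⟩ := cons_mem_injWords_inter_Iic.1 hw
      exact ⟨⟨x, hx⟩, v, hv, rfl⟩
  · rintro ⟨x, v, hv, rfl⟩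
    exact cons_mem_injWords_inter_Iic.2 ⟨x.2, hv⟩

theorem cons_mem_injWords_Iic {x : S} {v : List S} {M : Finset S} :
    x :: v ∈ injWords (Set.Iic M) ↔ x ∈ M ∧ v ∈ injWords (Set.Iic (M.erase x)) := by
  simpa using cons_mem_injWords_inter_Iic (x := x) (v := v) (U := Set.univ) (M := M)

theorem injWords_Iic_eq_union {y : S} {M : Finset S} (hy : y ∈ M) :
    injWords (Set.Iic M) =
      (injWords (Set.Iic (M.erase y)) ∪ (y :: ·) '' injWords (Set.Iic (M.erase y))) ∪
        ⋃ x : M.erase y, (x.1 :: ·) '' injWords ({A | y ∈ A} ∩ Set.Iic (M.erase x)) := by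
  ext w
  simp only [Set.mem_union, Set.mem_iUnion, Set.mem_image]
  constructor
  · intro hw
    by_cases hyw : y ∈ w
    · obtain ⟨x, v, rfl⟩ := List.exists_cons_of_ne_nil (List.ne_nil_of_mem hyw)
      obtain ⟨hx, hv⟩ := cons_mem_injWords_Iic.1 hw
      by_cases hxy : x = y
      · subst hxy
        exact Or.inl (Or.inr ⟨v, hv, rfl⟩)
      · have hyv : y ∈ v.toFinset :=
          List.mem_toFinset.2 ((List.mem_cons.1 hyw).resolve_left (Ne.symm hxy))
        exact Or.inr ⟨⟨x, Finset.mem_erase.2 ⟨hxy, hx⟩⟩, v, ⟨hv.1, hyv, hv.2⟩, rfl⟩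
    · exact Or.inl (Or.inl ⟨hw.1, Finset.subset_erase.2 ⟨hw.2, by simpa using hyw⟩⟩)
  · rintro ((hw | ⟨v, hv, rfl⟩) | ⟨x, v, hv, rfl⟩)
    · exact ⟨hw.1, hw.2.trans (Finset.erase_subset y M)⟩
    · exact cons_mem_injWords_Iic.2 ⟨hy, hv⟩
    · exact cons_mem_injWords_Iic.2 ⟨Finset.mem_of_mem_erase x.2, hv.1, hv.2.2⟩

theorem partitionable_injWords_Iic_empty :
    Partitionable (orderings ∅) (injWords (Set.Iic (∅ : Finset S))) := by
  have hnil : ∀ w ∈ injWords (Set.Iic (∅ : Finset S)), w = [] := fun w hw => by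
    simpa [injWords] using hw.2
  refine ⟨{([], [])}, ⟨?_, ?_, ?_, ?_⟩⟩
  · rintro p rfl
    exact ⟨List.nodup_nil, rfl⟩
  · rintro p rfl
    exact List.Sublist.slnil
  · rintro p rfl w ⟨-, hw⟩
    rw [List.sublist_nil.1 hw]
    exact ⟨List.nodup_nil, by simp⟩
  · intro w hw
    obtain rfl := hnil w hw
    exact ⟨_, ⟨rfl, List.Sublist.slnil, List.Sublist.slnil⟩, fun p hp => hp.1⟩

theorem disjoint_injWords_Iic_erase {y : S} {M : Finset S} :
    Disjoint (injWords (Set.Iic (M.erase y)) ∪ (y :: ·) '' injWords (Set.Iic (M.erase y)))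
      (⋃ x : M.erase y, (x.1 :: ·) '' injWords ({A | y ∈ A} ∩ Set.Iic (M.erase x))) := by
  refine Set.disjoint_left.2 ?_
  rintro w hw ⟨_, ⟨x, rfl⟩, v, hv, rfl⟩
  rcases hw with hw | ⟨u, -, hu⟩
  · have hyx : y ∈ x.1 :: v := List.mem_cons_of_mem _ (List.mem_toFinset.1 hv.2.1)
    simpa using hw.2 (List.mem_toFinset.2 hyx)
  · exact (Finset.mem_erase.1 x.2).1 (List.cons_eq_cons.1 hu).1.symm

theorem partitionable_injWords_inter_Iic (M : Finset S) {U : Set (Finset S)}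
    (hU : IsUpperSet U) : Partitionable (orderings M) (injWords (U ∩ Set.Iic M)) := by
  induction M using Finset.strongInduction generalizing U with
  | H M ih =>
    by_cases hempty : ∅ ∈ U
    · rw [hU.bot_mem.1 hempty, Set.univ_inter]
      rcases M.eq_empty_or_nonempty with rfl | ⟨y, hy⟩
      · exact partitionable_injWords_Iic_empty
      have hD : Partitionable (orderings (M.erase y)) (injWords (Set.Iic (M.erase y))) := by
        simpa using ih _ (Finset.erase_ssubset hy) isUpperSet_univ
      rw [injWords_Iic_eq_union hy]
      refine .union disjoint_injWords_Iic_erase (hD.union_image_cons hy)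
        (.iUnion (pairwise_disjoint_image_cons Subtype.val_injective _) fun x => ?_)
      have hx := Finset.mem_of_mem_erase x.2
      exact (ih _ (Finset.erase_ssubset hx) fun _ _ hAB hyA => hAB hyA).image_cons hx
    · rw [injWords_eq_iUnion_cons hempty]
      refine .iUnion (pairwise_disjoint_image_cons Subtype.val_injective _) fun x => ?_
      have hU' : IsUpperSet (insert x.1 ⁻¹' U) :=
        hU.preimage fun _ _ => Finset.insert_subset_insert x.1
      exact (ih _ (Finset.erase_ssubset x.2) hU').image_cons x.2

section Facets

variable {r : Finset S → Finset S → Prop} {Δ : Set (Finset S)}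

theorem injWords_eq_iUnion_facets [IsWellFounded _ r] (hfin : Δ.Finite)
    (hdown : ∀ σ ∈ Δ, ∀ τ ⊆ σ, τ ∈ Δ) :
    injWords Δ = ⋃ F : {F // Maximal (· ∈ Δ) F},
      injWords (avoidingEarlierFacets r Δ F ∩ Set.Iic F.1) := by
  ext w
  rw [Set.mem_iUnion]
  constructor
  · rintro ⟨hw, hwΔ⟩
    obtain ⟨F, ⟨hF, hwF⟩, hmin⟩ := (IsWellFounded.wf (r := r)).has_min
      {F | Maximal (· ∈ Δ) F ∧ w.toFinset ⊆ F}
      (let ⟨F, hwF, hF⟩ := hfin.exists_le_maximal hwΔ; ⟨F, hF, hwF⟩)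
    exact ⟨⟨F, hF⟩, hw, fun F' hF' hr hwF' => hmin F' ⟨hF', hwF'⟩ hr, hwF⟩
  · rintro ⟨F, hw, -, hwF⟩
    exact ⟨hw, hdown F.1 F.2.prop _ hwF⟩

theorem pairwise_disjoint_injWords_avoidingEarlierFacets [Std.Trichotomous r] :
    Pairwise (Disjoint on fun F : {F // Maximal (· ∈ Δ) F} =>
      injWords (avoidingEarlierFacets r Δ F ∩ Set.Iic F.1)) := by
  intro F F' hne
  refine Set.disjoint_left.2 ?_
  rintro w ⟨-, hF, hwF⟩ ⟨-, hF', hwF'⟩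
  rcases trichotomous_of r F.1 F'.1 with h | h | h
  · exact hF' F.1 F.2 h hwF
  · exact hne (Subtype.ext h)
  · exact hF F'.1 F'.2 h hwF'

end Facets

theorem partitionable_injWords {Δ : Set (Finset S)} (hfin : Δ.Finite)
    (hdown : ∀ σ ∈ Δ, ∀ τ ⊆ σ, τ ∈ Δ) :
    Partitionable (⋃ F : {F // Maximal (· ∈ Δ) F}, orderings F.1) (injWords Δ) := by
  rw [injWords_eq_iUnion_facets (r := WellOrderingRel) hfin hdown]
  exact .iUnion pairwise_disjoint_injWords_avoidingEarlierFacets fun F =>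
    (partitionable_injWords_inter_Iic F.1 (isUpperSet_avoidingEarlierFacets _ Δ F.1)).mono
      (Set.subset_iUnion (fun F : {F // Maximal (· ∈ Δ) F} => orderings F.1) F)

theorem eq_of_mem_orderings_of_sublist {Δ : Set (Finset S)} {F : Finset S}
    (hF : Maximal (· ∈ Δ) F) {τ u : List S} (hτ : τ ∈ orderings F) (hu : u ∈ injWords Δ)
    (hτu : τ <+ u) : u = τ := by
  have hFu : F = u.toFinset := hF.eq_of_le hu.2 fun a ha =>
    List.mem_toFinset.2 (hτu.subset (List.mem_toFinset.1 (hτ.2 ▸ ha)))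
  refine (hτu.eq_of_length ?_).symm
  rw [← List.toFinset_card_of_nodup hτ.1, ← List.toFinset_card_of_nodup hu.1, hτ.2, hFu]

end InjectiveWords

/-- The Boolean cell complex `Γ(Δ)` of injective words with content in a
finite simplicial complex `Δ` is partitionable: it admits a partition into
pairwise disjoint intervals `[σ_i, τ_i]` in the subword order such that each
`τ_i` is a maximal cell. -/
theorem gamma_partitionable {S : Type*} [DecidableEq S]
    (Δ : Set (Finset S)) (hfin : Δ.Finite)
    (hdown : ∀ σ ∈ Δ, ∀ τ ⊆ σ, τ ∈ Δ) :
    ∃ pairs : Set (List S × List S),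
      (∀ p ∈ pairs, p.1.Sublist p.2 ∧
        (p.1.Nodup ∧ p.1.toFinset ∈ Δ) ∧
        (p.2.Nodup ∧ p.2.toFinset ∈ Δ) ∧
        (∀ u : List S, u.Nodup → u.toFinset ∈ Δ → p.2.Sublist u → u = p.2)) ∧
      (∀ w : List S, w.Nodup → w.toFinset ∈ Δ →
        ∃! p : List S × List S, p ∈ pairs ∧ p.1.Sublist w ∧ w.Sublist p.2) := by
  obtain ⟨P, hP⟩ := InjectiveWords.partitionable_injWords hfin hdown
  refine ⟨P, fun p hp => ?_, fun w hw hwΔ => hP.existsUnique w ⟨hw, hwΔ⟩⟩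
  have hsub := hP.sublist p hp
  obtain ⟨F, hτ⟩ := Set.mem_iUnion.1 (hP.top_mem p hp)
  exact ⟨hsub, hP.subwordInterval_subset p hp ⟨.refl _, hsub⟩,
    hP.subwordInterval_subset p hp ⟨hsub, .refl _⟩,
    fun u hu huΔ hτu =>
      InjectiveWords.eq_of_mem_orderings_of_sublist F.2 hτ ⟨hu, huΔ⟩ hτu⟩
end
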